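/- arXiv:2301.06934 — 7 statements merged into one kernel-verified Lean document; each statement's English description precedes it below -/
import Mathlib

section
/- Let n ≥ 2, let 1 ≤ i < n, and let u ∈ ℝ. Then the n×n real matrix identity I + u·E_{n,i} = (I + (u/(1+u²))·E_{i,n}) · ŷ_{n,i}(u) · k̂_{n,i}(u) holds, and moreover k̂_{n,i}(u) is an orthogonal matrix (k̂_{n,i}(u)ᵀ · k̂_{n,i}(u) = I). -/
/-!
Every matrix in the identity agrees with the identity outside the coordinate plane of `e_i` and
`e_n`, so it is the image of a `2 × 2` matrix under `X ↦ 1 + Pᵀ (X - 1) P`, where `P` is the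
`2 × n` matrix selecting the coordinates `i` and `n`. Since `P Pᵀ = 1`, this map is multiplicative
and commutes with transposition, and both claims reduce to `2 × 2` computations: with
`r = √(1 + u²)`,
`!![1, 0; u, 1] = !![1, u / (1 + u²); 0, 1] * !![r⁻¹, 0; 0, r] * !![r⁻¹, -u r⁻¹; u r⁻¹, r⁻¹]`,
and the last factor is a rotation.
-/

/-- `ŷ_{n,i}(x)` (with 1-based row index `i` passed as `iv : Fin n` 0-based, and the
"last" index `m` corresponding to the 1-based index `n`): the diagonal matrix whose
`(i,i)` entry is `(1+x²)^{−1/2}`, whose `(n,n)` entry is `(1+x²)^{1/2}`, and whose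
other diagonal entries are 1. -/
noncomputable def yhat (n : ℕ) (i m : Fin n) (x : ℝ) : Matrix (Fin n) (Fin n) ℝ :=
  Matrix.diagonal fun j => if j = i then (Real.sqrt (1 + x ^ 2))⁻¹
    else if j = m then Real.sqrt (1 + x ^ 2) else 1

/-- `k̂_{n,i}(x)`: agrees with the identity except that its `(i,i)` and `(n,n)` entries
are `(1+x²)^{−1/2}`, its `(i,n)` entry is `−x(1+x²)^{−1/2}`, and its `(n,i)` entry is
`x(1+x²)^{−1/2}`. -/
noncomputable def khat (n : ℕ) (i m : Fin n) (x : ℝ) : Matrix (Fin n) (Fin n) ℝ :=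
  Matrix.of fun a b =>
    if a = i ∧ b = i then (Real.sqrt (1 + x ^ 2))⁻¹
    else if a = m ∧ b = m then (Real.sqrt (1 + x ^ 2))⁻¹
    else if a = i ∧ b = m then -x * (Real.sqrt (1 + x ^ 2))⁻¹
    else if a = m ∧ b = i then x * (Real.sqrt (1 + x ^ 2))⁻¹
    else if a = b then 1 else 0

open Matrix

section ExtendByIdentity

variable {ι κ R : Type*} [DecidableEq ι] [Fintype κ] [DecidableEq κ] [CommRing R]

noncomputable def extendByIdentity (σ : κ → ι) (X : Matrix κ κ R) : Matrix ι ι R :=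
  1 + (1 : Matrix ι ι R).submatrix id σ * (X - 1) * (1 : Matrix ι ι R).submatrix σ id

namespace extendByIdentity

variable (σ : κ → ι)

@[simp]
lemma one : extendByIdentity σ (1 : Matrix κ κ R) = 1 := by
  simp [extendByIdentity]

lemma transpose (X : Matrix κ κ R) : (extendByIdentity σ X)ᵀ = extendByIdentity σ Xᵀ := by
  simp [extendByIdentity, transpose_mul, transpose_submatrix, Matrix.mul_assoc]

lemma mul [Fintype ι] {σ : κ → ι} (hσ : Function.Injective σ) (X Y : Matrix κ κ R) :
    extendByIdentity σ (X * Y) = extendByIdentity σ X * extendByIdentity σ Y := by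
  have cancel (M : Matrix κ ι R) :
      (1 : Matrix ι ι R).submatrix σ id * ((1 : Matrix ι ι R).submatrix id σ * M) = M := by
    rw [← Matrix.mul_assoc, ← submatrix_mul _ _ _ _ _ Function.bijective_id, Matrix.one_mul,
      submatrix_one _ hσ, Matrix.one_mul]
  have hXY : X * Y - 1 = (X - 1) + (Y - 1) + (X - 1) * (Y - 1) := by noncomm_ring
  simp only [extendByIdentity, hXY, Matrix.add_mul, Matrix.mul_add, Matrix.one_mul,
    Matrix.mul_one, Matrix.mul_assoc, cancel]
  abel

lemma eq_one_add_sum_single (X : Matrix κ κ R) :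
    extendByIdentity σ X = 1 + ∑ p, ∑ q, single (σ p) (σ q) ((X - 1) p q) := by
  ext a b
  simp only [extendByIdentity, Matrix.add_apply, mul_apply, Matrix.sum_apply, single_apply,
    submatrix_apply, id, one_apply]
  rw [Finset.sum_comm]
  refine congrArg _ (Finset.sum_congr rfl fun q _ => ?_)
  rw [Finset.sum_mul]
  refine Finset.sum_congr rfl fun p _ => ?_
  by_cases hp : σ p = a <;> by_cases hq : σ q = b <;> simp [hp, hq, eq_comm (a := a)]

lemma one_add_single (p q : κ) (c : R) :
    extendByIdentity σ (1 + single p q c) = 1 + single (σ p) (σ q) c := by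
  rw [eq_one_add_sum_single, add_sub_cancel_left,
    Fintype.sum_eq_single p fun p' hp' => by simp [hp'.symm],
    Fintype.sum_eq_single q fun q' hq' => by simp [hq'.symm]]
  simp

lemma apply_pair {i m : ι} (him : i ≠ m) (X : Matrix (Fin 2) (Fin 2) R) (a b : ι) :
    extendByIdentity ![i, m] X a b =
      if a = i ∧ b = i then X 0 0 else if a = i ∧ b = m then X 0 1
      else if a = m ∧ b = i then X 1 0 else if a = m ∧ b = m then X 1 1
      else if a = b then 1 else 0 := by
  simp only [eq_one_add_sum_single, Fin.sum_univ_two, Matrix.add_apply, single_apply, one_apply,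
    Matrix.sub_apply, cons_val_zero, cons_val_one]
  by_cases hai : a = i <;> by_cases ham : a = m <;> by_cases hbi : b = i <;> by_cases hbm : b = m <;>
    simp_all [eq_comm]

end extendByIdentity

end ExtendByIdentity

lemma injective_pair_of_ne {α : Type*} {a b : α} (hab : a ≠ b) : Function.Injective ![a, b] := by
  intro p q h
  fin_cases p <;> fin_cases q <;> simp_all [hab.symm]

lemma rotation_transpose_mul_self {R : Type*} [CommRing R] {c s : R} (h : c ^ 2 + s ^ 2 = 1) :
    !![c, -s; s, c]ᵀ * !![c, -s; s, c] = 1 := by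
  ext a b
  fin_cases a <;> fin_cases b <;> simp [mul_apply, Fin.sum_univ_two, ← sq, h, mul_comm, add_comm]

lemma one_add_single_one_zero_eq_mul_diagonal_mul_rotation {K : Type*} [Field K] {u r : K}
    (hr : r ^ 2 = 1 + u ^ 2) (hr0 : r ≠ 0) :
    (1 + single 1 0 u : Matrix (Fin 2) (Fin 2) K) =
      (1 + single 0 1 (u / (1 + u ^ 2))) * diagonal ![r⁻¹, r] *
        !![r⁻¹, -(u * r⁻¹); u * r⁻¹, r⁻¹] := by
  have hu : 1 + u ^ 2 ≠ 0 := hr ▸ pow_ne_zero 2 hr0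
  ext a b
  fin_cases a <;> fin_cases b <;> simp [mul_apply, Fin.sum_univ_two, single_apply, one_apply] <;>
    field_simp <;> simp only [hr] <;> ring

lemma yhat_eq_extendByIdentity {n : ℕ} {i m : Fin n} (him : i ≠ m) (x : ℝ) :
    yhat n i m x = extendByIdentity ![i, m] (diagonal ![(√(1 + x ^ 2))⁻¹, √(1 + x ^ 2)]) := by
  ext a b
  rw [extendByIdentity.apply_pair him]
  by_cases hai : a = i <;> by_cases ham : a = m <;> by_cases hbi : b = i <;> by_cases hbm : b = m <;>
    subst_vars <;> simp_all [yhat, diagonal_apply, Ne.symm]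

lemma khat_eq_extendByIdentity {n : ℕ} {i m : Fin n} (him : i ≠ m) (x : ℝ) :
    khat n i m x = extendByIdentity ![i, m]
      !![(√(1 + x ^ 2))⁻¹, -(x * (√(1 + x ^ 2))⁻¹); x * (√(1 + x ^ 2))⁻¹, (√(1 + x ^ 2))⁻¹] := by
  ext a b
  rw [extendByIdentity.apply_pair him]
  by_cases hai : a = i <;> by_cases ham : a = m <;> by_cases hbi : b = i <;> by_cases hbm : b = m <;>
    subst_vars <;> simp_all [khat, Ne.symm]

/-- For `n ≥ 2`, `1 ≤ i < n` (0-based: `(i:ℕ)+1 < n`) and `u ∈ ℝ`: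
`I + u·E_{n,i} = (I + (u/(1+u²))·E_{i,n}) · ŷ_{n,i}(u) · k̂_{n,i}(u)`, and
`k̂_{n,i}(u)` is orthogonal. -/
theorem stmt_3 (n : ℕ) (i : Fin n) (hi : (i : ℕ) + 1 < n) (u : ℝ) :
    ((1 : Matrix (Fin n) (Fin n) ℝ)
        + Matrix.single ⟨n - 1, by omega⟩ i u
      = ((1 : Matrix (Fin n) (Fin n) ℝ)
          + Matrix.single i ⟨n - 1, by omega⟩ (u / (1 + u ^ 2)))
        * yhat n i ⟨n - 1, by omega⟩ u * khat n i ⟨n - 1, by omega⟩ u)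
    ∧ (khat n i ⟨n - 1, by omega⟩ u).transpose * khat n i ⟨n - 1, by omega⟩ u = 1 := by
  set m : Fin n := ⟨n - 1, by omega⟩
  have him : i ≠ m := Fin.ne_of_val_ne (by simp only [m]; omega)
  have hσ := injective_pair_of_ne him
  have hr : √(1 + u ^ 2) ^ 2 = 1 + u ^ 2 := Real.sq_sqrt (by positivity)
  have hr0 : √(1 + u ^ 2) ≠ 0 := by positivity
  rw [yhat_eq_extendByIdentity him, khat_eq_extendByIdentity him]
  constructor
  · have h := congrArg (extendByIdentity ![i, m])
      (one_add_single_one_zero_eq_mul_diagonal_mul_rotation hr hr0)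
    simpa [extendByIdentity.one_add_single, extendByIdentity.mul hσ] using h
  · rw [extendByIdentity.transpose, ← extendByIdentity.mul hσ,
      rotation_transpose_mul_self (by rw [mul_pow, inv_pow, hr]; field_simp), extendByIdentity.one]
end

section
/- Let 1 ≤ n' < n be integers and let u ∈ ℝ^{n'}. Set ũ_i = u_i · ∏_{j=1}^{i−1} (1+u_j²)^{1/2}, and let L be the n×n real matrix with ones on the diagonal, with L_{n,i} = ũ_i for 1 ≤ i ≤ n', and with all other entries zero. Define the upper-triangular unipotent matrix x† with ones on the diagonal, entries x†_{i,j} = −u_i u_j · ∏_{l=i}^{j−1} (1+u_l²)^{−1/2} for 1 ≤ i < j ≤ n', entries x†_{i,n} = u_i · ∏_{j=1}^{n'} (1+u_j²)^{−1/2} · ∏_{j=i}^{n'} (1+u_j²)^{−1/2} for 1 ≤ i ≤ n', and all other off-diagonal entries zero. Let y† = ŷ_{n,1}(u₁)·ŷ_{n,2}(u₂)⋯ŷ_{n,n'}(u_{n'}) and k† = k̂_{n,n'}(u_{n'})·k̂_{n,n'−1}(u_{n'−1})⋯k̂_{n,1}(u₁). Then L = x† · y† · k†, the matrix y† is diagonal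 with positive diagonal entries, and k† is orthogonal. -/
/-- `ŷ_{n,i}(x)` with 1-based index `i`: the diagonal matrix whose `(i,i)` entry is
`(1+x²)^{−1/2}`, whose `(n,n)` entry is `(1+x²)^{1/2}`, and whose other diagonal
entries are 1. -/
noncomputable def yhatE (n i : ℕ) (x : ℝ) : Matrix (Fin n) (Fin n) ℝ :=
  Matrix.diagonal fun j => if (j : ℕ) + 1 = i then (Real.sqrt (1 + x ^ 2))⁻¹
    else if (j : ℕ) + 1 = n then Real.sqrt (1 + x ^ 2) else 1

/-- `k̂_{n,i}(x)` with 1-based index `i`: agrees with the identity except that its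
`(i,i)` and `(n,n)` entries are `(1+x²)^{−1/2}`, its `(i,n)` entry is
`−x(1+x²)^{−1/2}`, and its `(n,i)` entry is `x(1+x²)^{−1/2}`. -/
noncomputable def khatE (n i : ℕ) (x : ℝ) : Matrix (Fin n) (Fin n) ℝ :=
  Matrix.of fun a b =>
    if (a : ℕ) + 1 = i ∧ (b : ℕ) + 1 = i then (Real.sqrt (1 + x ^ 2))⁻¹
    else if (a : ℕ) + 1 = n ∧ (b : ℕ) + 1 = n then (Real.sqrt (1 + x ^ 2))⁻¹
    else if (a : ℕ) + 1 = i ∧ (b : ℕ) + 1 = n then -x * (Real.sqrt (1 + x ^ 2))⁻¹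
    else if (a : ℕ) + 1 = n ∧ (b : ℕ) + 1 = i then x * (Real.sqrt (1 + x ^ 2))⁻¹
    else if a = b then 1 else 0

/-- The matrix `L`: ones on the diagonal, bottom-row entries
`L_{n,i} = ũ_i = u_i·∏_{j=1}^{i−1}(1+u_j²)^{1/2}` for `1 ≤ i ≤ n'` (1-based), and
all other entries zero.  (`u : ℕ → ℝ` is used with 1-based indices `u 1, …, u n'`.) -/
noncomputable def bottomRow (n n' : ℕ) (u : ℕ → ℝ) : Matrix (Fin n) (Fin n) ℝ :=
  Matrix.of fun a b =>
    if a = b then 1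
    else if (a : ℕ) + 1 = n ∧ (b : ℕ) + 1 ≤ n' then
      u ((b : ℕ) + 1) * ∏ j ∈ Finset.Icc 1 (b : ℕ), Real.sqrt (1 + u j ^ 2)
    else 0

/-- The upper-triangular unipotent matrix `x†`: ones on the diagonal,
`x†_{i,j} = −u_i u_j ∏_{l=i}^{j−1}(1+u_l²)^{−1/2}` for `1 ≤ i < j ≤ n'`,
`x†_{i,n} = u_i ∏_{j=1}^{n'}(1+u_j²)^{−1/2} ∏_{j=i}^{n'}(1+u_j²)^{−1/2}` for
`1 ≤ i ≤ n'`, and all other off-diagonal entries zero (1-based indices). -/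
noncomputable def xdagger (n n' : ℕ) (u : ℕ → ℝ) : Matrix (Fin n) (Fin n) ℝ :=
  Matrix.of fun a b =>
    if a = b then 1
    else if (a : ℕ) < (b : ℕ) ∧ (b : ℕ) + 1 ≤ n' then
      -(u ((a : ℕ) + 1) * u ((b : ℕ) + 1))
        * ∏ l ∈ Finset.Icc ((a : ℕ) + 1) (b : ℕ), (Real.sqrt (1 + u l ^ 2))⁻¹
    else if (b : ℕ) + 1 = n ∧ (a : ℕ) + 1 ≤ n' then
      u ((a : ℕ) + 1) * (∏ j ∈ Finset.Icc 1 n', (Real.sqrt (1 + u j ^ 2))⁻¹)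
        * ∏ j ∈ Finset.Icc ((a : ℕ) + 1) n', (Real.sqrt (1 + u j ^ 2))⁻¹
    else 0

/-- `y† = ŷ_{n,1}(u₁)·ŷ_{n,2}(u₂)⋯ŷ_{n,n'}(u_{n'})`. -/
noncomputable def ydagger (n n' : ℕ) (u : ℕ → ℝ) : Matrix (Fin n) (Fin n) ℝ :=
  ((List.range n').map fun i => yhatE n (i + 1) (u (i + 1))).prod

/-- `k† = k̂_{n,n'}(u_{n'})·k̂_{n,n'−1}(u_{n'−1})⋯k̂_{n,1}(u₁)`. -/
noncomputable def kdagger (n n' : ℕ) (u : ℕ → ℝ) : Matrix (Fin n) (Fin n) ℝ :=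
  ((List.range n').map fun i => khatE n (n' - i) (u (n' - i))).prod

/-!
Induct on `n'`. Passing from `n'` to `n' + 1` adds the entry `ũ_{n'+1}` at position
`(n, n'+1)` of `L` and multiplies `k†` on the left by `k̂_{n,n'+1}(u_{n'+1})`, a rotation in the
`(n'+1, n)`-plane. Right multiplication by it only mixes columns `n'+1` and `n`, and a direct
computation gives `x†_{n'+1} y†_{n'+1} k̂_{n,n'+1} = x†_{n'} y†_{n'} + ũ_{n'+1} E`, where `E` is
the matrix unit at `(n, n'+1)`. The rows of `k†_{n'}` beyond `n'` are those of the identity, so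
`E k†_{n'} = E`.
-/

open Matrix

lemma sqrt_one_add_sq_pos (x : ℝ) : 0 < √(1 + x ^ 2) := by positivity

lemma lt_or_eq_or_eq_or_lt_and_ne {α : Type*} [LinearOrder α] (q N a : α) :
    a < q ∨ a = q ∨ a = N ∨ (q < a ∧ a ≠ N) := by
  rcases lt_trichotomy a q with h | h | h <;> by_cases a = N <;> tauto

section khatE

variable {n i : ℕ} {p N : Fin n}

lemma khatE_apply (hp : (p : ℕ) + 1 = i) (hN : (N : ℕ) + 1 = n) (x : ℝ) (a b : Fin n) :
    khatE n i x a b =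
      if a = p ∧ b = p then (√(1 + x ^ 2))⁻¹
      else if a = N ∧ b = N then (√(1 + x ^ 2))⁻¹
      else if a = p ∧ b = N then -x * (√(1 + x ^ 2))⁻¹
      else if a = N ∧ b = p then x * (√(1 + x ^ 2))⁻¹
      else (1 : Matrix (Fin n) (Fin n) ℝ) a b := by
  simp only [khatE, of_apply, one_apply, Fin.ext_iff, ← hp, ← hN, Nat.add_right_cancel_iff]

lemma khatE_apply_of_row_ne {a : Fin n} (hai : (a : ℕ) + 1 ≠ i) (han : (a : ℕ) + 1 ≠ n)
    (x : ℝ) (b : Fin n) : khatE n i x a b = (1 : Matrix (Fin n) (Fin n) ℝ) a b := by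
  simp [khatE, one_apply, hai, han]

lemma mul_khatE_apply (hp : (p : ℕ) + 1 = i) (hN : (N : ℕ) + 1 = n) (hpN : p ≠ N) (x : ℝ)
    (M : Matrix (Fin n) (Fin n) ℝ) (a b : Fin n) :
    (M * khatE n i x) a b =
      if b = p then (M a p + x * M a N) * (√(1 + x ^ 2))⁻¹
      else if b = N then (M a N - x * M a p) * (√(1 + x ^ 2))⁻¹
      else M a b := by
  have hNp := hpN.symm
  simp only [mul_apply]
  split_ifs with hbp hbN
  · have hcol : ∀ d, khatE n i x d p = (if d = p then (√(1 + x ^ 2))⁻¹ else 0) +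
        (if d = N then x * (√(1 + x ^ 2))⁻¹ else 0) := by
      intro d; rw [khatE_apply hp hN]; split_ifs <;> simp_all
    simp [hbp, hcol, mul_add, Finset.sum_add_distrib]; ring
  · have hcol : ∀ d, khatE n i x d N = (if d = N then (√(1 + x ^ 2))⁻¹ else 0) +
        (if d = p then -x * (√(1 + x ^ 2))⁻¹ else 0) := by
      intro d; rw [khatE_apply hp hN]; split_ifs <;> simp_all
    simp [hbN, hcol, mul_add, Finset.sum_add_distrib]; ring
  · have hcol : ∀ d, khatE n i x d b = if d = b then 1 else 0 := by
      intro d; rw [khatE_apply hp hN]; simp [hbp, hbN, one_apply]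
    simp [hcol]

lemma khatE_transpose_mul_self (hp : (p : ℕ) + 1 = i) (hN : (N : ℕ) + 1 = n) (hpN : p ≠ N)
    (x : ℝ) : (khatE n i x)ᵀ * khatE n i x = 1 := by
  have hs : √(1 + x ^ 2) ^ 2 = 1 + x ^ 2 := Real.sq_sqrt (by positivity)
  have hs0 := (sqrt_one_add_sq_pos x).ne'
  have hNp := hpN.symm
  ext a b
  rw [mul_khatE_apply hp hN hpN]
  simp only [transpose_apply]
  have cases (c : Fin n) : c = p ∨ c = N ∨ c ≠ p ∧ c ≠ N := by tauto
  rcases cases a with rfl | rfl | ⟨hap, haN⟩ <;>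
    rcases cases b with rfl | rfl | ⟨hbp, hbN⟩ <;>
    simp [khatE_apply hp hN, one_apply, *] <;> grind

end khatE

lemma kdagger_succ (n m : ℕ) (u : ℕ → ℝ) :
    kdagger n (m + 1) u = khatE n (m + 1) (u (m + 1)) * kdagger n m u := by
  simp [kdagger, List.range_succ_eq_map, Function.comp_def]

lemma kdagger_transpose_mul_self {n m : ℕ} (hm : m < n) (u : ℕ → ℝ) :
    (kdagger n m u)ᵀ * kdagger n m u = 1 := by
  induction m with
  | zero => simp [kdagger]
  | succ m ih =>
    let p : Fin n := ⟨m, by omega⟩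
    let N : Fin n := ⟨n - 1, by omega⟩
    have hk := khatE_transpose_mul_self (p := p) (N := N) rfl (by simp [N]; omega)
      (by simp [p, N, Fin.ext_iff]; omega) (u (m + 1))
    rw [kdagger_succ, transpose_mul, Matrix.mul_assoc, ← Matrix.mul_assoc _ (khatE _ _ _), hk,
      Matrix.one_mul, ih (by omega)]

lemma kdagger_apply_of_le {n m : ℕ} (u : ℕ → ℝ) {r : Fin n} (hrm : m ≤ r)
    (hrn : (r : ℕ) + 1 ≠ n) (b : Fin n) :
    kdagger n m u r b = (1 : Matrix (Fin n) (Fin n) ℝ) r b := by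
  induction m with
  | zero => simp [kdagger]
  | succ m ih =>
    simp [kdagger_succ, mul_apply, one_apply, ih (by omega),
      khatE_apply_of_row_ne (show (r : ℕ) + 1 ≠ m + 1 by omega) hrn]

lemma single_mul_kdagger {n m : ℕ} (u : ℕ → ℝ) {N q : Fin n} (hqm : m ≤ q)
    (hq : (q : ℕ) + 1 ≠ n) (v : ℝ) :
    Matrix.single N q v * kdagger n m u = Matrix.single N q v := by
  ext a b
  by_cases ha : a = N
  · subst ha; simp [kdagger_apply_of_le u hqm hq, one_apply, Matrix.single_apply]
  · simp [ha, Ne.symm ha]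

lemma ydagger_succ (n m : ℕ) (u : ℕ → ℝ) :
    ydagger n (m + 1) u = ydagger n m u * yhatE n (m + 1) (u (m + 1)) := by
  simp [ydagger, List.range_succ]

noncomputable def ydaggerDiag (n m : ℕ) (u : ℕ → ℝ) (j : Fin n) : ℝ :=
  if (j : ℕ) + 1 ≤ m then (√(1 + u ((j : ℕ) + 1) ^ 2))⁻¹
  else if (j : ℕ) + 1 = n then ∏ i ∈ Finset.Icc 1 m, √(1 + u i ^ 2)
  else 1

lemma ydaggerDiag_pos (n m : ℕ) (u : ℕ → ℝ) (j : Fin n) : 0 < ydaggerDiag n m u j := by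
  unfold ydaggerDiag
  split_ifs <;> positivity

lemma ydagger_eq_diagonal {n m : ℕ} (hm : m < n) (u : ℕ → ℝ) :
    ydagger n m u = diagonal (ydaggerDiag n m u) := by
  induction m with
  | zero => ext a b; simp [ydagger, ydaggerDiag, one_apply, diagonal_apply]
  | succ m ih =>
    rw [ydagger_succ, ih (by omega), yhatE, diagonal_mul_diagonal]
    congr 1
    funext j
    simp only [ydaggerDiag]
    split_ifs <;> first | omega | simp_all [Finset.prod_Icc_succ_top]

section xdagger_mul_ydagger

variable {n k : ℕ} (hk : k < n) (u : ℕ → ℝ)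
include hk

lemma xdagger_mul_ydagger_apply_last {N : Fin n} (hN : (N : ℕ) + 1 = n) (a : Fin n) :
    (xdagger n k u * ydagger n k u) a N =
      if a = N then ∏ j ∈ Finset.Icc 1 k, √(1 + u j ^ 2)
      else if (a : ℕ) < k then
        u ((a : ℕ) + 1) * ∏ j ∈ Finset.Icc ((a : ℕ) + 1) k, (√(1 + u j ^ 2))⁻¹
      else 0 := by
  have hS : ∏ j ∈ Finset.Icc 1 k, √(1 + u j ^ 2) ≠ 0 :=
    (Finset.prod_pos fun j _ => sqrt_one_add_sq_pos (u j)).ne'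
  rw [ydagger_eq_diagonal hk, mul_diagonal]
  simp only [xdagger, ydaggerDiag, of_apply, Fin.ext_iff]
  split_ifs <;> first | omega | (simp only [Finset.prod_inv_distrib]; field_simp) | simp

lemma xdagger_mul_ydagger_apply_of_lt {b : Fin n} (hb : (b : ℕ) < k) (a : Fin n) :
    (xdagger n k u * ydagger n k u) a b =
      (if a = b then 1
        else if (a : ℕ) < b then
          -(u ((a : ℕ) + 1) * u ((b : ℕ) + 1)) *
            ∏ l ∈ Finset.Icc ((a : ℕ) + 1) b, (√(1 + u l ^ 2))⁻¹
        else 0) * (√(1 + u ((b : ℕ) + 1) ^ 2))⁻¹ := by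
  rw [ydagger_eq_diagonal hk, mul_diagonal]
  simp only [xdagger, ydaggerDiag, of_apply, Fin.ext_iff]
  split_ifs <;> first | omega | rfl

lemma xdagger_mul_ydagger_apply_of_le {b : Fin n} (hb : k ≤ b) (hbn : (b : ℕ) + 1 ≠ n)
    (a : Fin n) : (xdagger n k u * ydagger n k u) a b = (1 : Matrix (Fin n) (Fin n) ℝ) a b := by
  rw [ydagger_eq_diagonal hk, mul_diagonal]
  simp only [xdagger, ydaggerDiag, of_apply, one_apply, Fin.ext_iff]
  split_ifs <;> first | omega | simp

end xdagger_mul_ydagger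

section step

variable {n m : ℕ} (hm : m + 1 < n) (u : ℕ → ℝ) {N q : Fin n} (hN : (N : ℕ) + 1 = n)
  (hq : (q : ℕ) = m)
include hm hN hq

lemma xdagger_mul_ydagger_mul_khatE_apply_col (a : Fin n) :
    (xdagger n (m + 1) u * ydagger n (m + 1) u * khatE n (m + 1) (u (m + 1))) a q =
      (xdagger n m u * ydagger n m u) a q +
        Matrix.single N q (u (m + 1) * ∏ j ∈ Finset.Icc 1 m, √(1 + u j ^ 2)) a q := by
  have hqN : q < N := Fin.lt_def.mpr (by omega)
  rw [mul_khatE_apply (by omega) hN hqN.ne, if_pos rfl, Matrix.single_apply,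
    xdagger_mul_ydagger_apply_of_lt hm u (by omega), xdagger_mul_ydagger_apply_last hm u hN,
    xdagger_mul_ydagger_apply_of_le (by omega) u (by omega) (by omega), one_apply]
  subst hq
  have hs : √(1 + u (q + 1) ^ 2) ^ 2 = 1 + u (q + 1) ^ 2 := Real.sq_sqrt (by positivity)
  rcases lt_or_eq_or_eq_or_lt_and_ne q N a with ha | rfl | rfl | ⟨ha, haN⟩
  · simp [ha.ne, ha.le, (ha.trans hqN).ne, (ha.trans hqN).ne', Fin.lt_def.mp ha,
      Finset.prod_Icc_succ_top (show (a : ℕ) + 1 ≤ q + 1 by omega)]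
    exact Or.inl (by ring)
  · simp [hqN.ne, hqN.ne']
    field_simp
    linarith
  · simp [hqN.ne', not_lt_of_gt hqN, Finset.prod_Icc_succ_top]
    field_simp
  · simp [not_lt_of_gt ha, haN, haN.symm, ha.ne', not_le_of_gt ha]

lemma xdagger_mul_ydagger_mul_khatE_apply_last (a : Fin n) :
    (xdagger n (m + 1) u * ydagger n (m + 1) u * khatE n (m + 1) (u (m + 1))) a N =
      (xdagger n m u * ydagger n m u) a N := by
  have hqN : q < N := Fin.lt_def.mpr (by omega)
  rw [mul_khatE_apply (by omega) hN hqN.ne, if_neg hqN.ne', if_pos rfl,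
    xdagger_mul_ydagger_apply_of_lt hm u (b := q) (by omega),
    xdagger_mul_ydagger_apply_last hm u hN, xdagger_mul_ydagger_apply_last (by omega) u hN]
  subst hq
  have hs : √(1 + u (q + 1) ^ 2) ^ 2 = 1 + u (q + 1) ^ 2 := Real.sq_sqrt (by positivity)
  rcases lt_or_eq_or_eq_or_lt_and_ne q N a with ha | rfl | rfl | ⟨ha, haN⟩
  · simp [ha.ne, ha.le, (ha.trans hqN).ne, Fin.lt_def.mp ha,
      Finset.prod_Icc_succ_top (show (a : ℕ) + 1 ≤ q + 1 by omega)]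
    field_simp
    rw [hs]
  · simp [hqN.ne]
  · simp [not_lt_of_gt hqN, hqN.ne', Finset.prod_Icc_succ_top]
    field_simp
  · simp [not_lt_of_gt ha, haN, ha.ne', not_le_of_gt ha]

lemma xdagger_mul_ydagger_mul_khatE :
    xdagger n (m + 1) u * ydagger n (m + 1) u * khatE n (m + 1) (u (m + 1)) =
      xdagger n m u * ydagger n m u +
        Matrix.single N q (u (m + 1) * ∏ j ∈ Finset.Icc 1 m, √(1 + u j ^ 2)) := by
  ext a b
  rw [Matrix.add_apply]
  by_cases hbq : b = q
  · subst hbq; exact xdagger_mul_ydagger_mul_khatE_apply_col hm u hN hq a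
  by_cases hbN : b = N
  · subst hbN
    rw [xdagger_mul_ydagger_mul_khatE_apply_last hm u hN hq,
      Matrix.single_apply_of_col_ne _ _ (fun h => hbq h.symm), add_zero]
  have hbn : (b : ℕ) + 1 ≠ n := fun h => hbN (Fin.ext (by omega))
  rw [mul_khatE_apply (p := q) (by omega) hN (Fin.ne_of_val_ne (by omega)), if_neg hbq,
    if_neg hbN, Matrix.single_apply_of_col_ne _ _ (Ne.symm hbq), add_zero]
  rcases lt_or_gt_of_ne hbq with hb | hb
  · rw [xdagger_mul_ydagger_apply_of_lt hm u (by omega),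
      xdagger_mul_ydagger_apply_of_lt (by omega) u (by omega)]
  · rw [xdagger_mul_ydagger_apply_of_le hm u (by omega) hbn,
      xdagger_mul_ydagger_apply_of_le (by omega) u (by omega) hbn]

lemma bottomRow_succ :
    bottomRow n (m + 1) u =
      bottomRow n m u +
        Matrix.single N q (u (m + 1) * ∏ j ∈ Finset.Icc 1 m, √(1 + u j ^ 2)) := by
  have hqN : (q : ℕ) ≠ N := by omega
  ext a b
  simp only [bottomRow, of_apply, Matrix.add_apply, Matrix.single_apply, Fin.ext_iff]
  split_ifs <;> first | omega | simp_all

end step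

lemma bottomRow_eq_xdagger_mul_ydagger_mul_kdagger {n m : ℕ} (hm : m < n) (u : ℕ → ℝ) :
    bottomRow n m u = xdagger n m u * ydagger n m u * kdagger n m u := by
  induction m with
  | zero => ext a b; simp [bottomRow, xdagger, ydagger, kdagger]
  | succ m ih =>
    let N : Fin n := ⟨n - 1, by omega⟩
    let q : Fin n := ⟨m, by omega⟩
    have hN : (N : ℕ) + 1 = n := by simp [N]; omega
    rw [bottomRow_succ hm u (q := q) hN rfl, ih (by omega), kdagger_succ, ← Matrix.mul_assoc,
      xdagger_mul_ydagger_mul_khatE hm u (q := q) hN rfl, Matrix.add_mul,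
      single_mul_kdagger u le_rfl (by simp [q]; omega)]

theorem stmt_4_general (n n' : ℕ) (h2 : n' < n) (u : ℕ → ℝ) :
    bottomRow n n' u = xdagger n n' u * ydagger n n' u * kdagger n n' u
    ∧ (∀ a b : Fin n, a ≠ b → ydagger n n' u a b = 0)
    ∧ (∀ a : Fin n, 0 < ydagger n n' u a a)
    ∧ (kdagger n n' u).transpose * kdagger n n' u = 1 := by
  refine ⟨bottomRow_eq_xdagger_mul_ydagger_mul_kdagger h2 u, fun a b hab => ?_, fun a => ?_,
    kdagger_transpose_mul_self h2 u⟩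
  · rw [ydagger_eq_diagonal h2, diagonal_apply_ne _ hab]
  · rw [ydagger_eq_diagonal h2, diagonal_apply_eq]
    exact ydaggerDiag_pos n n' u a

/-- For `1 ≤ n' < n` and `u ∈ ℝ^{n'}`: the Iwasawa decomposition
`L = x†·y†·k†` holds, `y†` is diagonal with positive diagonal entries, and `k†` is
orthogonal. -/
theorem stmt_4 (n n' : ℕ) (h1 : 1 ≤ n') (h2 : n' < n) (u : ℕ → ℝ) :
    bottomRow n n' u = xdagger n n' u * ydagger n n' u * kdagger n n' u
    ∧ (∀ a b : Fin n, a ≠ b → ydagger n n' u a b = 0)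
    ∧ (∀ a : Fin n, 0 < ydagger n n' u a a)
    ∧ (kdagger n n' u).transpose * kdagger n n' u = 1 :=
  stmt_4_general n n' h2 u
end

section
/- Let 1 ≤ n' < n be integers and let u ∈ ℝ^{n'}. Define the upper-triangular unipotent matrix x† with ones on the diagonal, entries x†_{i,j} = −u_i u_j · ∏_{l=i}^{j−1} (1+u_l²)^{−1/2} for 1 ≤ i < j ≤ n', entries x†_{i,n} = u_i · ∏_{j=1}^{n'} (1+u_j²)^{−1/2} · ∏_{j=i}^{n'} (1+u_j²)^{−1/2} for 1 ≤ i ≤ n', and all other off-diagonal entries zero. Then the inverse of x† is the upper-triangular unipotent matrix with ones on the diagonal, entries (x†⁻¹)_{i,j} = u_i u_j (1+u_i²)^{−1/2} · ∏_{l=i+1}^{j−1} (1+u_l²)^{1/2} for 1 ≤ i < j ≤ n', entries (x†⁻¹)_{i,n} = −u_i (1+u_i²)^{−1} · ∏_{j=1}^{i−1} (1+u_j²)^{−1/2} for 1 ≤ i ≤ n', and all other off-diagonal entries zero. -/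
/-- The claimed inverse of `x†`: ones on the diagonal,
`(x†⁻¹)_{i,j} = u_i u_j (1+u_i²)^{−1/2} ∏_{l=i+1}^{j−1}(1+u_l²)^{1/2}` for
`1 ≤ i < j ≤ n'`, `(x†⁻¹)_{i,n} = −u_i (1+u_i²)^{−1} ∏_{j=1}^{i−1}(1+u_j²)^{−1/2}`
for `1 ≤ i ≤ n'`, and all other off-diagonal entries zero (1-based indices). -/
noncomputable def xdaggerInv (n n' : ℕ) (u : ℕ → ℝ) : Matrix (Fin n) (Fin n) ℝ :=
  Matrix.of fun a b =>
    if a = b then 1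
    else if (a : ℕ) < (b : ℕ) ∧ (b : ℕ) + 1 ≤ n' then
      u ((a : ℕ) + 1) * u ((b : ℕ) + 1) * (Real.sqrt (1 + u ((a : ℕ) + 1) ^ 2))⁻¹
        * ∏ l ∈ Finset.Icc ((a : ℕ) + 2) (b : ℕ), Real.sqrt (1 + u l ^ 2)
    else if (b : ℕ) + 1 = n ∧ (a : ℕ) + 1 ≤ n' then
      -(u ((a : ℕ) + 1)) * (1 + u ((a : ℕ) + 1) ^ 2)⁻¹
        * ∏ j ∈ Finset.Icc 1 (a : ℕ), (Real.sqrt (1 + u j ^ 2))⁻¹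
    else 0

/-!
Put `p k = ∏_{l=1}^{k} (1 + u_l²)^{1/2}`. Every product of square roots in the entries of `x†`
and of its claimed inverse `y` is a quotient of two values of `p`, and then each off-diagonal
entry factors into a function of the row times a function of the column, e.g.
`x†_{ij} = -(u_i p_{i-1}) (u_j / p_{j-1})`. The inner sum of an entry of `x† y` becomes
`∑ u_k² / p_k² = ∑ (1 / p_{k-1}² - 1 / p_k²)`, which telescopes against the two boundary terms.
So `x† y = 1`, and `y x† = 1` follows because the matrices are square.
-/

open Finset

noncomputable def sqrtProd (u : ℕ → ℝ) (k : ℕ) : ℝ := ∏ l ∈ Icc 1 k, √(1 + u l ^ 2)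

section sqrtProd

variable (u : ℕ → ℝ)

lemma sqrtProd_pos (k : ℕ) : 0 < sqrtProd u k :=
  prod_pos fun _ _ => Real.sqrt_pos.2 (by positivity)

lemma prod_Icc_sqrt_eq_div {a b : ℕ} (h : a ≤ b) :
    ∏ l ∈ Icc (a + 1) b, √(1 + u l ^ 2) = sqrtProd u b / sqrtProd u a := by
  have hIcc : ∀ k, Icc 1 k = Ioc 0 k := Icc_add_one_left_eq_Ioc 0
  rw [eq_div_iff (sqrtProd_pos u a).ne', sqrtProd, sqrtProd, hIcc, hIcc, Icc_add_one_left_eq_Ioc,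
    mul_comm, prod_Ioc_consecutive _ (Nat.zero_le a) h]

lemma prod_Icc_inv_sqrt_eq_div {a b : ℕ} (h : a ≤ b) :
    ∏ l ∈ Icc (a + 1) b, (√(1 + u l ^ 2))⁻¹ = sqrtProd u a / sqrtProd u b := by
  rw [prod_inv_distrib, prod_Icc_sqrt_eq_div u h, inv_div]

lemma prod_Icc_one_inv_sqrt (k : ℕ) :
    ∏ l ∈ Icc 1 k, (√(1 + u l ^ 2))⁻¹ = (sqrtProd u k)⁻¹ :=
  prod_inv_distrib _

lemma sqrt_one_add_sq_eq_div (k : ℕ) :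
    √(1 + u (k + 1) ^ 2) = sqrtProd u (k + 1) / sqrtProd u k := by
  rw [← prod_Icc_sqrt_eq_div u k.le_succ, Icc_self, prod_singleton]

lemma one_add_sq_eq_div (k : ℕ) :
    1 + u (k + 1) ^ 2 = (sqrtProd u (k + 1) / sqrtProd u k) ^ 2 := by
  rw [← sqrt_one_add_sq_eq_div, Real.sq_sqrt (by positivity)]

lemma sq_div_sqrtProd_sq (k : ℕ) :
    u (k + 1) ^ 2 / sqrtProd u (k + 1) ^ 2
      = (sqrtProd u k ^ 2)⁻¹ - (sqrtProd u (k + 1) ^ 2)⁻¹ := by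
  have h := one_add_sq_eq_div u k
  have := (sqrtProd_pos u k).ne'
  have := (sqrtProd_pos u (k + 1)).ne'
  field_simp at h ⊢
  linear_combination h

lemma sum_Ioo_sq_div_sqrtProd_sq {a b : ℕ} (h : a < b) :
    ∑ k ∈ Ioo a b, u (k + 1) ^ 2 / sqrtProd u (k + 1) ^ 2
      = (sqrtProd u (a + 1) ^ 2)⁻¹ - (sqrtProd u b ^ 2)⁻¹ := by
  have := sum_Ico_sub (fun k => -(sqrtProd u k ^ 2)⁻¹) h
  simp only [neg_sub_neg] at this
  rw [← Ico_add_one_left_eq_Ioo, ← this]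
  exact sum_congr rfl fun k _ => sq_div_sqrtProd_sq u k

end sqrtProd

/- The entries of `xdagger` and `xdaggerInv` in terms of `sqrtProd`, indexed by `ℕ` so that
sums over `Fin n` become sums over `range n`. They agree with the matrices only for `a, b < n`:
for `a ≥ n` the last-column branch can fire below the diagonal. -/

noncomputable def xdaggerEntry (n n' : ℕ) (u : ℕ → ℝ) (a b : ℕ) : ℝ :=
  if a = b then 1
  else if a < b ∧ b + 1 ≤ n' then -(u (a + 1) * sqrtProd u a) * (u (b + 1) / sqrtProd u b)
  else if b + 1 = n ∧ a + 1 ≤ n' then u (a + 1) * sqrtProd u a / sqrtProd u n' ^ 2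
  else 0

noncomputable def xdaggerInvEntry (n n' : ℕ) (u : ℕ → ℝ) (a b : ℕ) : ℝ :=
  if a = b then 1
  else if a < b ∧ b + 1 ≤ n' then
    u (a + 1) * sqrtProd u a / sqrtProd u (a + 1) ^ 2 * (u (b + 1) * sqrtProd u b)
  else if b + 1 = n ∧ a + 1 ≤ n' then -(u (a + 1) * sqrtProd u a / sqrtProd u (a + 1) ^ 2)
  else 0

section entries

variable {n : ℕ} (n' : ℕ) (u : ℕ → ℝ)

lemma xdagger_apply (a b : Fin n) : xdagger n n' u a b = xdaggerEntry n n' u a b := by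
  have := sqrtProd_pos u
  simp only [xdagger, xdaggerEntry, Matrix.of_apply, Fin.ext_iff]
  split_ifs with _ hlt hlast
  · rfl
  · rw [prod_Icc_inv_sqrt_eq_div u hlt.1.le]
    field_simp
  · rw [prod_Icc_one_inv_sqrt, prod_Icc_inv_sqrt_eq_div u (by omega)]
    field_simp
  · rfl

lemma xdaggerInv_apply (a b : Fin n) : xdaggerInv n n' u a b = xdaggerInvEntry n n' u a b := by
  have := sqrtProd_pos u
  simp only [xdaggerInv, xdaggerInvEntry, Matrix.of_apply, Fin.ext_iff]
  split_ifs with _ hlt hlast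
  · rfl
  · rw [sqrt_one_add_sq_eq_div, prod_Icc_sqrt_eq_div u (hlt.1 : (a : ℕ) + 1 ≤ b)]
    field_simp
  · rw [one_add_sq_eq_div, prod_Icc_one_inv_sqrt]
    field_simp
  · rfl

end entries

lemma sum_range_mul_eq_sum_Icc {R : Type*} [NonUnitalNonAssocSemiring R] {x y : ℕ → R}
    {n a b : ℕ} (hx : ∀ k < a, x k = 0) (hy : ∀ k < n, b < k → y k = 0) (hb : b < n) :
    ∑ k ∈ range n, x k * y k = ∑ k ∈ Icc a b, x k * y k := by
  refine (sum_subset (fun k hk => ?_) fun k hk_range hk => ?_).symm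
  · simp only [mem_Icc, mem_range] at hk ⊢; omega
  · rw [mem_Icc, not_and_or, not_le, not_le] at hk
    rcases hk with h | h
    · rw [hx k h, zero_mul]
    · rw [hy k (mem_range.1 hk_range) h, mul_zero]

lemma sum_Icc_eq_add_add_sum_Ioo {M : Type*} [AddCommMonoid M] (f : ℕ → M) {a b : ℕ}
    (h : a < b) : ∑ k ∈ Icc a b, f k = f a + f b + ∑ k ∈ Ioo a b, f k := by
  rw [Icc_eq_cons_Ioc h.le, sum_cons, Ioc_eq_cons_Ioo h, sum_cons, add_assoc]
section identities

variable {n n' : ℕ} {u : ℕ → ℝ} {a b : ℕ}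

lemma xdaggerEntry_self : xdaggerEntry n n' u a a = 1 := if_pos rfl

lemma xdaggerInvEntry_self : xdaggerInvEntry n n' u a a = 1 := if_pos rfl

lemma xdaggerEntry_of_lt (ha : a < n) (h : b < a) : xdaggerEntry n n' u a b = 0 := by
  simp only [xdaggerEntry]; split_ifs <;> first | rfl | omega

lemma xdaggerInvEntry_of_lt (ha : a < n) (h : b < a) : xdaggerInvEntry n n' u a b = 0 := by
  simp only [xdaggerInvEntry]; split_ifs <;> first | rfl | omega

lemma xdaggerEntry_of_lt_of_succ_le (h : a < b) (hb : b + 1 ≤ n') :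
    xdaggerEntry n n' u a b = -(u (a + 1) * sqrtProd u a) * (u (b + 1) / sqrtProd u b) := by
  simp [xdaggerEntry, h.ne, h, hb]

lemma xdaggerInvEntry_of_lt_of_succ_le (h : a < b) (hb : b + 1 ≤ n') :
    xdaggerInvEntry n n' u a b
      = u (a + 1) * sqrtProd u a / sqrtProd u (a + 1) ^ 2 * (u (b + 1) * sqrtProd u b) := by
  simp [xdaggerInvEntry, h.ne, h, hb]

lemma xdaggerEntry_of_last (hbn : b + 1 = n) (hb : n' ≤ b) (ha : a + 1 ≤ n') :
    xdaggerEntry n n' u a b = u (a + 1) * sqrtProd u a / sqrtProd u n' ^ 2 := by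
  simp only [xdaggerEntry]; split_ifs <;> first | rfl | omega

lemma xdaggerInvEntry_of_last (hbn : b + 1 = n) (hb : n' ≤ b) (ha : a + 1 ≤ n') :
    xdaggerInvEntry n n' u a b = -(u (a + 1) * sqrtProd u a / sqrtProd u (a + 1) ^ 2) := by
  simp only [xdaggerInvEntry]; split_ifs <;> first | rfl | omega

lemma xdaggerEntry_add_xdaggerInvEntry_add_sum_of_succ_le (hab : a < b) (hb : b + 1 ≤ n') :
    xdaggerEntry n n' u a b + xdaggerInvEntry n n' u a b
      + ∑ k ∈ Ioo a b, xdaggerEntry n n' u a k * xdaggerInvEntry n n' u k b = 0 := by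
  have hsum : ∑ k ∈ Ioo a b, xdaggerEntry n n' u a k * xdaggerInvEntry n n' u k b
      = -(u (a + 1) * sqrtProd u a) * (u (b + 1) * sqrtProd u b)
          * ∑ k ∈ Ioo a b, u (k + 1) ^ 2 / sqrtProd u (k + 1) ^ 2 := by
    rw [mul_sum]
    refine sum_congr rfl fun k hk => ?_
    rw [mem_Ioo] at hk
    rw [xdaggerEntry_of_lt_of_succ_le hk.1 (by omega), xdaggerInvEntry_of_lt_of_succ_le hk.2 hb]
    field_simp [(sqrtProd_pos u k).ne']
  rw [hsum, sum_Ioo_sq_div_sqrtProd_sq u hab, xdaggerEntry_of_lt_of_succ_le hab hb,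
    xdaggerInvEntry_of_lt_of_succ_le hab hb]
  field_simp [(sqrtProd_pos u b).ne', (sqrtProd_pos u (a + 1)).ne']
  ring

lemma xdaggerEntry_add_xdaggerInvEntry_add_sum_of_last (hbn : b + 1 = n) (hb : n' ≤ b)
    (ha : a + 1 ≤ n') :
    xdaggerEntry n n' u a b + xdaggerInvEntry n n' u a b
      + ∑ k ∈ Ioo a b, xdaggerEntry n n' u a k * xdaggerInvEntry n n' u k b = 0 := by
  have hsum : ∑ k ∈ Ioo a b, xdaggerEntry n n' u a k * xdaggerInvEntry n n' u k b
      = u (a + 1) * sqrtProd u a * ∑ k ∈ Ioo a n', u (k + 1) ^ 2 / sqrtProd u (k + 1) ^ 2 := by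
    rw [mul_sum, ← sum_subset (Ioo_subset_Ioo_right hb)]
    · refine sum_congr rfl fun k hk => ?_
      rw [mem_Ioo] at hk
      rw [xdaggerEntry_of_lt_of_succ_le hk.1 hk.2, xdaggerInvEntry_of_last hbn hb hk.2]
      field_simp [(sqrtProd_pos u k).ne']
    · intro k hk hk'
      simp only [mem_Ioo, not_and, not_lt] at hk hk'
      rw [xdaggerEntry]
      split_ifs <;> first | omega | rw [zero_mul]
  rw [hsum, sum_Ioo_sq_div_sqrtProd_sq u ha, xdaggerEntry_of_last hbn hb ha,
    xdaggerInvEntry_of_last hbn hb ha]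
  field_simp [(sqrtProd_pos u n').ne', (sqrtProd_pos u (a + 1)).ne']
  ring

lemma sum_Icc_xdaggerEntry_mul_xdaggerInvEntry (hab : a < b) (hb : b < n) :
    ∑ k ∈ Icc a b, xdaggerEntry n n' u a k * xdaggerInvEntry n n' u k b = 0 := by
  have hsplit : ∑ k ∈ Icc a b, xdaggerEntry n n' u a k * xdaggerInvEntry n n' u k b
      = xdaggerEntry n n' u a b + xdaggerInvEntry n n' u a b
        + ∑ k ∈ Ioo a b, xdaggerEntry n n' u a k * xdaggerInvEntry n n' u k b := by
    rw [sum_Icc_eq_add_add_sum_Ioo _ hab, xdaggerEntry_self, xdaggerInvEntry_self, one_mul,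
      mul_one, add_comm (xdaggerInvEntry n n' u a b)]
  by_cases hbn' : b + 1 ≤ n'
  · rw [hsplit, xdaggerEntry_add_xdaggerInvEntry_add_sum_of_succ_le hab hbn']
  by_cases hlast : b + 1 = n ∧ a + 1 ≤ n'
  · rw [hsplit, xdaggerEntry_add_xdaggerInvEntry_add_sum_of_last hlast.1 (by omega) hlast.2]
  refine sum_eq_zero fun k hk => ?_
  rw [mem_Icc] at hk
  simp only [xdaggerEntry, xdaggerInvEntry]
  split_ifs <;> first | omega | rw [zero_mul] | rw [mul_zero]

lemma sum_range_xdaggerEntry_mul_xdaggerInvEntry (ha : a < n) (hb : b < n) :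
    ∑ k ∈ range n, xdaggerEntry n n' u a k * xdaggerInvEntry n n' u k b
      = if a = b then 1 else 0 := by
  rw [sum_range_mul_eq_sum_Icc (fun k hk => xdaggerEntry_of_lt ha hk)
    (fun k hk hbk => xdaggerInvEntry_of_lt hk hbk) hb]
  rcases lt_trichotomy a b with hab | rfl | hba
  · rw [if_neg hab.ne, sum_Icc_xdaggerEntry_mul_xdaggerInvEntry hab hb]
  · rw [if_pos rfl, Icc_self, sum_singleton, xdaggerEntry_self, xdaggerInvEntry_self, one_mul]
  · rw [if_neg hba.ne', Icc_eq_empty_of_lt hba, sum_empty]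

end identities

theorem xdagger_mul_xdaggerInv (n n' : ℕ) (u : ℕ → ℝ) :
    xdagger n n' u * xdaggerInv n n' u = 1 := by
  ext a b
  simp only [Matrix.mul_apply, xdagger_apply, xdaggerInv_apply, Matrix.one_apply, Fin.ext_iff]
  rw [Fin.sum_univ_eq_sum_range (fun k => xdaggerEntry n n' u a k * xdaggerInvEntry n n' u k b),
    sum_range_xdaggerEntry_mul_xdaggerInvEntry a.isLt b.isLt]

theorem stmt_5_general (n n' : ℕ) (u : ℕ → ℝ) :
    xdagger n n' u * xdaggerInv n n' u = 1
    ∧ xdaggerInv n n' u * xdagger n n' u = 1 :=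
  ⟨xdagger_mul_xdaggerInv n n' u, mul_eq_one_comm.mp (xdagger_mul_xdaggerInv n n' u)⟩

/-- For `1 ≤ n' < n` and `u ∈ ℝ^{n'}`, the matrix `xdaggerInv` is
the two-sided inverse of `x†`. -/
theorem stmt_5 (n n' : ℕ) (h1 : 1 ≤ n') (h2 : n' < n) (u : ℕ → ℝ) :
    xdagger n n' u * xdaggerInv n n' u = 1
    ∧ xdaggerInv n n' u * xdagger n n' u = 1 :=
  stmt_5_general n n' u
end

section
/- For every z ∈ ℂ with Re(z) > 0, the integral (1/(2π)) · ∫_{−∞}^{∞} Γ(1+it) · z^{−(1+it)} dt converges absolutely and equals e^{−z}, where z^{s} = exp(s · Log z) with the principal branch of the logarithm. -/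
/-!
For `f x = e^{-zx}` the Mellin transform is `Γ(s) z^{-s}` when `Re s > 0`: for real `z > 0` this
is the Gamma integral, and both sides are holomorphic in `z` on the right half-plane, so the
identity theorem extends it. On the line `Re s = 1`, the reflection formula gives
`|Γ(1+it)|² = πt / sinh(πt)`, so `Γ(1+it) z^{-(1+it)}` decays exponentially in `|t|` at any
rate below `π/2 - |arg z| > 0` and is integrable. Mellin inversion at `x = 1` then returns `f 1 = e^{-z}`.
-/

open MeasureTheory Complex Set Filter Topology
open scoped Real ComplexConjugate

lemma Real.div_sinh_le_two_div_mul_exp {x κ : ℝ} (hx : 0 < x) (hκ : 0 < κ) (hκ1 : κ ≤ 1) :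
    x / Real.sinh x ≤ 2 / κ * Real.exp (-((1 - κ) * x)) := by
  have hEy : Real.exp x * Real.exp (-x) = 1 := by
    rw [← Real.exp_add, add_neg_cancel, Real.exp_zero]
  have h2x : (1 + x) * Real.exp (-x) ^ 2 ≤ 1 := by
    have : 1 + x ≤ Real.exp x ^ 2 := by
      rw [← Real.exp_nat_mul]; push_cast; linarith [Real.add_one_le_exp (2 * x)]
    calc (1 + x) * Real.exp (-x) ^ 2 ≤ Real.exp x ^ 2 * Real.exp (-x) ^ 2 := by gcongr
      _ = 1 := by rw [← mul_pow, hEy, one_pow]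
  have hκx : 2 * (1 + x) ≤ 2 / κ * Real.exp (κ * x) := by
    rw [div_mul_eq_mul_div, le_div_iff₀ hκ]
    nlinarith [Real.add_one_le_exp (κ * x)]
  have hsplit : Real.exp (-((1 - κ) * x)) = Real.exp (κ * x) * Real.exp (-x) := by
    rw [← Real.exp_add]; ring_nf
  have hsinh := Real.sinh_pos_iff.mpr hx
  rw [div_le_iff₀ hsinh, hsplit]
  calc x ≤ 2 * (1 + x) * Real.exp (-x) * Real.sinh x := by
        rw [Real.sinh_eq]; linear_combination h2x - (1 + x) * hEy
    _ ≤ 2 / κ * Real.exp (κ * x) * Real.exp (-x) * Real.sinh x := by gcongr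
    _ = _ := by ring

lemma integrable_exp_neg_mul_abs {b : ℝ} (hb : 0 < b) :
    Integrable fun t : ℝ => Real.exp (-(b * |t|)) := by
  rw [← integrableOn_univ, ← Iic_union_Ioi (a := 0)]
  refine IntegrableOn.union ((integrableOn_exp_mul_Iic hb 0).congr_fun (fun t ht => ?_)
    measurableSet_Iic) ((integrableOn_exp_mul_Ioi (neg_neg_of_pos hb) 0).congr_fun
    (fun t ht => ?_) measurableSet_Ioi)
  · rw [abs_of_nonpos ht, mul_neg, neg_neg]
  · simp only [abs_of_pos (show 0 < t from ht), neg_mul]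

lemma integrableOn_rpow_mul_exp_neg_mul {a b : ℝ} (ha : -1 < a) (hb : 0 < b) :
    IntegrableOn (fun x : ℝ => x ^ a * Real.exp (-b * x)) (Ioi 0) := by
  simpa using integrableOn_rpow_mul_exp_neg_mul_rpow ha one_pos hb

namespace Complex

lemma norm_Gamma_one_add_mul_I_sq {t : ℝ} (ht : t ≠ 0) :
    ‖Gamma (1 + t * I)‖ ^ 2 = π * t / Real.sinh (π * t) := by
  have htI : (t : ℂ) * I ≠ 0 := by simp [ht]
  have hconj : conj (Gamma (1 + t * I)) = Gamma (1 - t * I) := by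
    rw [← Gamma_conj]; congr 1; simp [Complex.ext_iff]
  have hsin : sin (π * (t * I)) = (Real.sinh (π * t) : ℂ) * I := by
    rw [← mul_assoc, sin_mul_I, ofReal_sinh]; push_cast; ring_nf
  apply ofReal_injective
  calc ((‖Gamma (1 + t * I)‖ ^ 2 : ℝ) : ℂ)
        = Gamma (1 + t * I) * conj (Gamma (1 + t * I)) := by
        rw [mul_conj, normSq_eq_norm_sq]
    _ = t * I * (Gamma (t * I) * Gamma (1 - t * I)) := by
        rw [hconj, add_comm, Gamma_add_one _ htI, mul_assoc]
    _ = _ := by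
        rw [Gamma_mul_Gamma_one_sub, hsin]; push_cast; field_simp

lemma exists_norm_Gamma_one_add_mul_I_le {c : ℝ} (hc0 : 0 ≤ c) (hc : c < π / 2) :
    ∃ C, ∀ t : ℝ, ‖Gamma (1 + t * I)‖ ≤ C * Real.exp (-(c * |t|)) := by
  -- `κ` is chosen so that `(1 - κ) * π = 2 * c`.
  set κ := 1 - 2 * c / π
  have hκ : 0 < κ := by
    have : 2 * c / π < 1 := by rw [div_lt_one Real.pi_pos]; linarith
    linarith
  have hκ1 : κ ≤ 1 := by
    have : 0 ≤ 2 * c / π := by positivity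
    linarith
  refine ⟨√(2 / κ), fun t => ?_⟩
  rw [← pow_le_pow_iff_left₀ (norm_nonneg _) (by positivity) two_ne_zero, mul_pow,
    Real.sq_sqrt (by positivity), ← Real.exp_nat_mul]
  rcases eq_or_ne t 0 with rfl | ht
  · rw [ofReal_zero, zero_mul, add_zero, Gamma_one, norm_one, abs_zero, mul_zero, neg_zero,
      mul_zero, Real.exp_zero, mul_one, one_pow, le_div_iff₀ hκ]
    linarith
  · have hsym : π * t / Real.sinh (π * t) = π * |t| / Real.sinh (π * |t|) := by
      rcases abs_choice t with h | h <;> rw [h]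
      simp [Real.sinh_neg, neg_div_neg_eq]
    rw [norm_Gamma_one_add_mul_I_sq ht, hsym]
    refine (Real.div_sinh_le_two_div_mul_exp (mul_pos Real.pi_pos (abs_pos.mpr ht)) hκ hκ1)
      |>.trans_eq ?_
    congr 2
    simp only [κ]; field_simp; push_cast; ring

lemma norm_cpow_neg_one_add_mul_I_le {z : ℂ} (hz : z ≠ 0) (t : ℝ) :
    ‖z ^ (-(1 + t * I))‖ ≤ ‖z‖⁻¹ * Real.exp (|arg z| * |t|) := by
  rw [norm_cpow_of_ne_zero hz]
  simp only [neg_re, add_re, one_re, mul_re, ofReal_re, I_re, ofReal_im, I_im, neg_im, add_im,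
    one_im, mul_im, mul_zero, mul_one, sub_zero, zero_add, add_zero]
  rw [Real.rpow_neg_one, div_eq_mul_inv, ← Real.exp_neg, neg_mul_eq_mul_neg, neg_neg, ← abs_mul]
  gcongr
  exact le_abs_self _

lemma integrable_Gamma_one_add_mul_I_mul_cpow {z : ℂ} (hz : 0 < z.re) :
    Integrable fun t : ℝ => Gamma (1 + t * I) * z ^ (-(1 + t * I)) := by
  have hz0 : z ≠ 0 := by rintro rfl; simp at hz
  have harg : |arg z| < π / 2 := abs_arg_lt_pi_div_two_iff.mpr (Or.inl hz)
  obtain ⟨C, hC⟩ := exists_norm_Gamma_one_add_mul_I_le (c := (π / 2 + |arg z|) / 2)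
    (by positivity) (by linarith)
  have hcont : Continuous fun t : ℝ => Gamma (1 + t * I) * z ^ (-(1 + t * I)) := by
    refine .mul (continuous_iff_continuousAt.mpr fun t => ?_)
      (.const_cpow (by fun_prop) (.inl hz0))
    refine (differentiableAt_Gamma _ fun m h => ?_).continuousAt.comp (by fun_prop)
    have := congrArg re h
    simp at this
    linarith [m.cast_nonneg (α := ℝ)]
  refine ((integrable_exp_neg_mul_abs (b := (π / 2 - |arg z|) / 2) (by linarith)).const_mul
    (C * ‖z‖⁻¹)).mono' hcont.aestronglyMeasurable (.of_forall fun t => ?_)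
  rw [norm_mul]
  calc _ ≤ C * Real.exp (-((π / 2 + |arg z|) / 2 * |t|))
        * (‖z‖⁻¹ * Real.exp (|arg z| * |t|)) :=
        mul_le_mul (hC t) (norm_cpow_neg_one_add_mul_I_le hz0 t) (norm_nonneg _)
          ((norm_nonneg _).trans (hC t))
    _ = _ := by rw [mul_mul_mul_comm, ← Real.exp_add]; ring_nf

lemma norm_ofReal_cpow_mul_cexp_neg_mul {x : ℝ} (hx : 0 < x) (s z : ℂ) :
    ‖(x : ℂ) ^ s * cexp (-(z * x))‖ = x ^ s.re * Real.exp (-z.re * x) := by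
  rw [norm_mul, norm_cpow_eq_rpow_re_of_pos hx, norm_exp]
  simp

lemma mellinConvergent_cexp_neg_mul {s z : ℂ} (hs : 0 < s.re) (hz : 0 < z.re) :
    MellinConvergent (fun x : ℝ => cexp (-(z * x))) s := by
  refine (integrableOn_rpow_mul_exp_neg_mul (a := s.re - 1) (by linarith) hz).mono' ?_ ?_
  · exact (by fun_prop : Measurable _).aestronglyMeasurable
  · filter_upwards [ae_restrict_mem measurableSet_Ioi] with x hx
    rw [smul_eq_mul, norm_ofReal_cpow_mul_cexp_neg_mul hx, sub_re, one_re]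

lemma differentiableOn_mellin_cexp_neg_mul {s : ℂ} (hs : 0 < s.re) :
    DifferentiableOn ℂ (fun z => mellin (fun x : ℝ => cexp (-(z * x))) s) {z | 0 < z.re} := by
  intro z₀ hz₀
  have hz₀' : 0 < z₀.re / 2 := half_pos hz₀
  have hd := hasDerivAt_integral_of_dominated_loc_of_deriv_le (μ := volume.restrict (Ioi 0))
    (F := fun z (x : ℝ) => (x : ℂ) ^ (s - 1) • cexp (-(z * x)))
    (F' := fun z (x : ℝ) => (x : ℂ) ^ (s - 1) • (cexp (-(z * x)) * -x))
    (bound := fun x => x ^ s.re * Real.exp (-(z₀.re / 2) * x))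
    (Metric.ball_mem_nhds z₀ hz₀')
    (.of_forall fun z => (by fun_prop : Measurable _).aestronglyMeasurable)
    (mellinConvergent_cexp_neg_mul hs hz₀) (by fun_prop : Measurable _).aestronglyMeasurable ?_
    (integrableOn_rpow_mul_exp_neg_mul (by linarith) hz₀') ?_
  · exact hd.2.differentiableAt.differentiableWithinAt
  · filter_upwards [ae_restrict_mem measurableSet_Ioi] with x (hx : 0 < x)
    intro z hz
    have hre : z₀.re / 2 ≤ z.re := by
      have := (abs_re_le_norm (z - z₀)).trans_lt (mem_ball_iff_norm.mp hz)
      rw [sub_re, abs_lt] at this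
      linarith
    rw [smul_eq_mul, ← mul_assoc, norm_mul, norm_ofReal_cpow_mul_cexp_neg_mul hx, norm_neg,
      norm_real, Real.norm_of_nonneg hx.le, sub_re, one_re, Real.rpow_sub_one hx.ne']
    calc x ^ s.re / x * Real.exp (-z.re * x) * x = x ^ s.re * Real.exp (-z.re * x) := by
          field_simp
      _ ≤ _ := by gcongr
  · filter_upwards with x
    intro z _
    exact (((hasDerivAt_id z).mul_const (x : ℂ)).neg.cexp.const_mul _).congr_deriv (by simp)

lemma mellin_ofReal_cexp_neg_mul {s : ℂ} (hs : 0 < s.re) {r : ℝ} (hr : 0 < r) :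
    mellin (fun x : ℝ => cexp (-(r * x))) s = Gamma s * r ^ (-s) := by
  have harg : ((r : ℂ)).arg ≠ π := by
    rw [arg_ofReal_of_nonneg hr.le]; exact Real.pi_ne_zero.symm
  simp only [mellin, smul_eq_mul]
  rw [integral_cpow_mul_exp_neg_mul_Ioi hs hr, one_div, inv_cpow _ _ harg, ← cpow_neg, mul_comm]

lemma mellin_cexp_neg_mul {s z : ℂ} (hs : 0 < s.re) (hz : 0 < z.re) :
    mellin (fun x : ℝ => cexp (-(z * x))) s = Gamma s * z ^ (-s) := by
  have hU : IsOpen {z : ℂ | 0 < z.re} := isOpen_lt continuous_const continuous_re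
  have hG : DifferentiableOn ℂ (fun z : ℂ => Gamma s * z ^ (-s)) {z | 0 < z.re} :=
    fun z hz => ((differentiableAt_id.cpow_const (.inl hz)).const_mul _).differentiableWithinAt
  have hlim : Tendsto (fun r : ℝ => (r : ℂ)) (𝓝[>] 1) (𝓝[≠] 1) :=
    tendsto_nhdsWithin_of_tendsto_nhds_of_eventually_within _
      ((continuous_ofReal.tendsto' 1 1 ofReal_one).mono_left nhdsWithin_le_nhds)
      (eventually_nhdsWithin_of_forall fun r hr => by simpa using (mem_Ioi.mp hr).ne')
  have hreal : ∀ᶠ r : ℝ in 𝓝[>] 1,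
      mellin (fun x : ℝ => cexp (-(r * x))) s = Gamma s * r ^ (-s) :=
    eventually_nhdsWithin_of_forall fun r hr => mellin_ofReal_cexp_neg_mul hs (zero_lt_one.trans hr)
  have hfreq := hlim.frequently (p := fun w : ℂ =>
    mellin (fun x : ℝ => cexp (-(w * x))) s = Gamma s * w ^ (-s)) hreal.frequently
  exact ((differentiableOn_mellin_cexp_neg_mul hs).analyticOnNhd hU)
    |>.eqOn_of_preconnected_of_frequently_eq (hG.analyticOnNhd hU)
      (convex_halfSpace_re_gt 0).isPreconnected (by simp) hfreq hz

end Complex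

/-- (Cahen–Mellin.)  For `Re(z) > 0`, the integral
`(1/(2π))·∫_{−∞}^{∞} Γ(1+it)·z^{−(1+it)} dt` converges absolutely and equals
`e^{−z}`, where `z^s = exp(s·Log z)` is the principal branch (Mathlib's `cpow`). -/
theorem stmt_8 (z : ℂ) (hz : 0 < z.re) :
    Integrable (fun t : ℝ =>
      Complex.Gamma (1 + (t : ℂ) * Complex.I)
        * z ^ (-(1 + (t : ℂ) * Complex.I))) volume
    ∧ (1 / (2 * (Real.pi : ℂ)))
        * ∫ t : ℝ, Complex.Gamma (1 + (t : ℂ) * Complex.I)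
            * z ^ (-(1 + (t : ℂ) * Complex.I))
      = Complex.exp (-z) := by
  have hint := integrable_Gamma_one_add_mul_I_mul_cpow hz
  have hmellin : ∀ t : ℝ, mellin (fun x : ℝ => cexp (-(z * x))) (1 + t * I)
      = Gamma (1 + t * I) * z ^ (-(1 + t * I)) := fun t => mellin_cexp_neg_mul (by simp) hz
  have hinv := mellinInv_mellin_eq 1 (fun x : ℝ => cexp (-(z * x))) one_pos
    (by simpa using mellinConvergent_cexp_neg_mul one_pos hz)
    (by simpa [VerticalIntegrable, hmellin] using hint) (by fun_prop)
  refine ⟨hint, ?_⟩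
  simpa [mellinInv, hmellin] using hinv
end

section
/- Let n ≥ 1 and let ν ∈ ℂⁿ satisfy ν_i − ν_j ∉ (1/2)·ℤ for all i ≠ j. For a tuple τ ∈ ℂⁿ write τ̄ = (τ_n, τ_{n−1}, …, τ₁) for its reversal, and define D(τ) = [∏_{1 ≤ j < k ≤ n} (2π)^{τ_k − τ_j} Γ(1 + τ_j − τ_k)] · [∏_{i=1}^{n} 2^{(n−i)·((n+1)/2 − i + 2τ_i)}] · [∏_{1 ≤ i < j ≤ n} π^{−(1 + 2τ̄_i − 2τ̄_j)/2} Γ((1 + 2τ̄_i − 2τ̄_j)/2)] · [∏_{1 ≤ i < j ≤ n} π^{1/2} · Γ((2τ̄_i − 2τ̄_j)/2) / Γ((1 + 2τ̄_i − 2τ̄_j)/2)]. Then for every permutation σ of {1,…,n}, writing ν∘σ = (ν_{σ(1)}, …, ν_{σ(n)}), one has sgn(σ) · D(ν∘σ) = D(ν). -/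
/-!
For each pair `j < k`, with `d = τ_k - τ_j`, the Gamma factors of `D` combine: the factors
`Γ((1 + 2d)/2)` cancel (they are nonzero since `d ∉ 1/2 + ℤ`), the powers of `π` cancel, and the
reflection formula `Γ(d) Γ(1 - d) = π / sin(π d)` leaves
`D(τ) = 2^(c_n + (n - 1) ∑ τ_i) ∏_{j<k} π / sin(π (τ_k - τ_j))` for a constant `c_n`.
The power of `2` is symmetric in `τ`, while `x ↦ π / sin(π x)` is odd, so permuting `τ`
multiplies the product by the sign of the permutation, as for the Vandermonde product.
-/

/-- The function `D(τ)` of Statement 13:  with `τ̄` the reversal of `τ` (realized by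
`Fin.rev`), `D(τ)` is the product of
* `∏_{j<k} (2π)^{τ_k−τ_j} Γ(1+τ_j−τ_k)`  (the normalizing factor `Λ_{w_l}`),
* `∏_{i=1}^{n} 2^{(n−i)((n+1)/2−i+2τ_i)}`  (the power function at `diag(2^{n−1},…,1)`,
  written with 1-based index `i = (i₀:ℕ)+1`),
* `∏_{i<j} π^{−(1+2τ̄_i−2τ̄_j)/2} Γ((1+2τ̄_i−2τ̄_j)/2)`  (the factor `Λ_JW(2τ̄)`), and
* `∏_{i<j} π^{1/2} Γ((2τ̄_i−2τ̄_j)/2)/Γ((1+2τ̄_i−2τ̄_j)/2)`  (the degenerate spherical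
  Jacquet–Whittaker value). -/
noncomputable def Dfun (n : ℕ) (τ : Fin n → ℂ) : ℂ :=
  (∏ p ∈ Finset.univ.filter (fun p : Fin n × Fin n => p.1 < p.2),
      (2 * (Real.pi : ℂ)) ^ (τ p.2 - τ p.1) * Complex.Gamma (1 + τ p.1 - τ p.2))
  * (∏ i : Fin n,
      (2 : ℂ) ^ (((n : ℂ) - ((i : ℕ) + 1 : ℕ))
        * (((n : ℂ) + 1) / 2 - ((i : ℕ) + 1 : ℕ) + 2 * τ i)))
  * (∏ p ∈ Finset.univ.filter (fun p : Fin n × Fin n => p.1 < p.2),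
      (Real.pi : ℂ) ^ (-(1 + 2 * τ p.1.rev - 2 * τ p.2.rev) / 2)
        * Complex.Gamma ((1 + 2 * τ p.1.rev - 2 * τ p.2.rev) / 2))
  * (∏ p ∈ Finset.univ.filter (fun p : Fin n × Fin n => p.1 < p.2),
      (Real.pi : ℂ) ^ ((1 : ℂ) / 2)
        * Complex.Gamma ((2 * τ p.1.rev - 2 * τ p.2.rev) / 2)
        / Complex.Gamma ((1 + 2 * τ p.1.rev - 2 * τ p.2.rev) / 2))

open Finset Complex Equiv

local notation "ltPairs " n:max =>
  Finset.univ.filter (fun p : Fin n × Fin n => Prod.fst p < Prod.snd p)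

section Pairs

variable {n : ℕ}

theorem prod_ltPairs_rev {M : Type*} [CommMonoid M] (f : Fin n × Fin n → M) :
    ∏ p ∈ ltPairs n, f p = ∏ p ∈ ltPairs n, f (p.2.rev, p.1.rev) :=
  prod_nbij' (fun p => (p.2.rev, p.1.rev)) (fun p => (p.2.rev, p.1.rev)) (by simp) (by simp)
    (by simp) (by simp) (by simp)

@[to_additive]
theorem prod_ltPairs_eq_prod_Ioi {M : Type*} [CommMonoid M] (f : Fin n × Fin n → M) :
    ∏ p ∈ ltPairs n, f p = ∏ i, ∏ j ∈ Ioi i, f (i, j) := by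
  rw [prod_filter, Fintype.prod_prod_type]
  refine prod_congr rfl fun i _ => ?_
  rw [← prod_filter]
  exact prod_congr (by ext; simp) fun _ _ => rfl

@[to_additive]
theorem prod_ltPairs_eq_prod_Iio {M : Type*} [CommMonoid M] (f : Fin n × Fin n → M) :
    ∏ p ∈ ltPairs n, f p = ∏ j, ∏ i ∈ Iio j, f (i, j) := by
  rw [prod_filter, Fintype.prod_prod_type, prod_comm]
  refine prod_congr rfl fun j _ => ?_
  rw [← prod_filter]
  exact prod_congr (by ext; simp) fun _ _ => rfl

theorem sum_ltPairs_sub {R : Type*} [CommRing R] (τ : Fin n → R) :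
    ∑ p ∈ ltPairs n, (τ p.2 - τ p.1)
      = ∑ j : Fin n, (((j : ℕ) : R) - ((n - 1 - j : ℕ) : R)) * τ j := by
  simp only [sum_sub_distrib, sum_ltPairs_eq_sum_Iio (fun p => τ p.2),
    sum_ltPairs_eq_sum_Ioi (fun p => τ p.1), sum_const, Fin.card_Iio, Fin.card_Ioi, nsmul_eq_mul,
    sub_mul]

theorem prod_ltPairs_comp_perm_of_symm {M : Type*} [CommMonoid M] (f : Fin n → Fin n → M)
    (hf : ∀ i j, f i j = f j i) (σ : Perm (Fin n)) :
    ∏ p ∈ ltPairs n, f (σ p.1) (σ p.2) = ∏ p ∈ ltPairs n, f p.1 p.2 := by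
  refine prod_nbij'
    (fun p => if σ p.1 < σ p.2 then (σ p.1, σ p.2) else (σ p.2, σ p.1))
    (fun p => if σ.symm p.1 < σ.symm p.2 then (σ.symm p.1, σ.symm p.2)
      else (σ.symm p.2, σ.symm p.1))
    ?_ ?_ ?_ ?_ ?_ <;> intro ⟨i, j⟩ hij <;> simp only [mem_filter, mem_univ, true_and] at hij ⊢
  · split_ifs with h
    · exact h
    · exact lt_of_le_of_ne (not_lt.mp h) (σ.injective.ne hij.ne')
  · split_ifs with h
    · exact h
    · exact lt_of_le_of_ne (not_lt.mp h) (σ.symm.injective.ne hij.ne')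
  · by_cases h : σ i < σ j <;> simp [h, hij, hij.not_gt]
  · by_cases h : σ.symm i < σ.symm j <;> simp [h, hij, hij.not_gt]
  · split_ifs
    · rfl
    · exact hf _ _

theorem prod_ltPairs_sub_comp_perm {R : Type*} [CommRing R] (v : Fin n → R) (σ : Perm (Fin n)) :
    ∏ p ∈ ltPairs n, (v (σ p.2) - v (σ p.1))
      = ((Perm.sign σ : ℤ) : R) * ∏ p ∈ ltPairs n, (v p.2 - v p.1) := by
  have h := Matrix.det_permute σ (Matrix.vandermonde v)
  rw [show (Matrix.vandermonde v).submatrix σ id = Matrix.vandermonde (v ∘ σ) by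
    ext; simp [Matrix.vandermonde_apply], Matrix.det_vandermonde, Matrix.det_vandermonde] at h
  rw [prod_ltPairs_eq_prod_Ioi, prod_ltPairs_eq_prod_Ioi]
  simpa [Units.smul_def] using h

/-- `g x = x * (g x / x)` with `x ↦ g x / x` even reduces this to the Vandermonde case. -/
theorem prod_ltPairs_comp_perm_of_odd {K : Type*} [Field K] [CharZero K] {g : K → K}
    (hg : g.Odd) (v : Fin n → K) (σ : Perm (Fin n)) :
    ∏ p ∈ ltPairs n, g (v (σ p.2) - v (σ p.1))
      = ((Perm.sign σ : ℤ) : K) * ∏ p ∈ ltPairs n, g (v p.2 - v p.1) := by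
  have hsplit : ∀ w : Fin n → K, ∏ p ∈ ltPairs n, g (w p.2 - w p.1)
      = (∏ p ∈ ltPairs n, (w p.2 - w p.1))
        * ∏ p ∈ ltPairs n, g (w p.2 - w p.1) / (w p.2 - w p.1) := by
    intro w
    rw [← prod_mul_distrib]
    refine prod_congr rfl fun p _ => ?_
    rcases eq_or_ne (w p.2 - w p.1) 0 with h | h
    · simp [h, hg.map_zero]
    · field_simp
  have hsymm (i j : Fin n) : g (v j - v i) / (v j - v i) = g (v i - v j) / (v i - v j) := by
    rw [← neg_sub, hg, neg_div_neg_eq]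
  rw [hsplit fun i => v (σ i), hsplit v, prod_ltPairs_sub_comp_perm, mul_assoc,
    prod_ltPairs_comp_perm_of_symm (fun i j => g (v j - v i) / (v j - v i)) hsymm]

end Pairs

theorem prod_cpow_eq_cpow_sum {α : Type*} (s : Finset α) {b : ℂ} (hb : b ≠ 0) (f : α → ℂ) :
    ∏ a ∈ s, b ^ f a = b ^ ∑ a ∈ s, f a := by
  simp_rw [cpow_def_of_ne_zero hb, ← exp_sum, mul_sum]

theorem two_mul_pi_cpow_mul_Gamma_mul_eq (a b : ℂ) (h : ∀ m : ℕ, a - b ≠ -m - 1 / 2) :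
    ((2 * (Real.pi : ℂ)) ^ (a - b) * Gamma (1 + b - a)) *
      ((Real.pi : ℂ) ^ (-(1 + 2 * a - 2 * b) / 2) * Gamma ((1 + 2 * a - 2 * b) / 2)) *
      ((Real.pi : ℂ) ^ ((1 : ℂ) / 2) * Gamma ((2 * a - 2 * b) / 2)
        / Gamma ((1 + 2 * a - 2 * b) / 2))
    = 2 ^ (a - b) * (Real.pi / sin (Real.pi * (a - b))) := by
  have hπ : (Real.pi : ℂ) ≠ 0 := ofReal_ne_zero.mpr Real.pi_ne_zero
  have hΓ : Gamma ((1 + 2 * a - 2 * b) / 2) ≠ 0 :=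
    Gamma_ne_zero fun m hm => h m (by linear_combination hm)
  have h2π : (2 * (Real.pi : ℂ)) ^ (a - b) = 2 ^ (a - b) * (Real.pi : ℂ) ^ (a - b) := by
    exact_mod_cast mul_cpow_ofReal_nonneg zero_le_two Real.pi_pos.le (a - b)
  have hπ_pow : (Real.pi : ℂ) ^ (a - b) * (Real.pi : ℂ) ^ (-(1 + 2 * a - 2 * b) / 2)
      * (Real.pi : ℂ) ^ ((1 : ℂ) / 2) = 1 := by
    rw [← cpow_add _ _ hπ, ← cpow_add _ _ hπ, ← cpow_zero (Real.pi : ℂ)]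
    ring_nf
  rw [h2π, show (2 * a - 2 * b) / 2 = a - b by ring, show 1 + b - a = 1 - (a - b) by ring,
    ← Gamma_mul_Gamma_one_sub]
  calc _ = ((Real.pi : ℂ) ^ (a - b) * (Real.pi : ℂ) ^ (-(1 + 2 * a - 2 * b) / 2)
          * (Real.pi : ℂ) ^ ((1 : ℂ) / 2))
        * (Gamma ((1 + 2 * a - 2 * b) / 2) / Gamma ((1 + 2 * a - 2 * b) / 2))
        * (2 ^ (a - b) * (Gamma (a - b) * Gamma (1 - (a - b)))) := by ring
    _ = _ := by rw [hπ_pow, div_self hΓ, one_mul, one_mul]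

theorem two_cpow_exponent_eq {n : ℕ} (τ : Fin n → ℂ) :
    ∑ p ∈ ltPairs n, (τ p.2 - τ p.1)
      + ∑ i : Fin n, ((n : ℂ) - ((i : ℕ) + 1 : ℕ))
          * (((n : ℂ) + 1) / 2 - ((i : ℕ) + 1 : ℕ) + 2 * τ i)
    = ∑ i : Fin n, ((n : ℂ) - ((i : ℕ) + 1 : ℕ)) * (((n : ℂ) + 1) / 2 - ((i : ℕ) + 1 : ℕ))
      + ((n : ℂ) - 1) * ∑ i, τ i := by
  rw [sum_ltPairs_sub, mul_sum, ← sum_add_distrib, ← sum_add_distrib]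
  refine sum_congr rfl fun i _ => ?_
  rw [Nat.sub_sub, Nat.cast_sub (by omega)]
  push_cast
  ring

theorem Dfun_eq {n : ℕ} (τ : Fin n → ℂ)
    (hτ : ∀ i j : Fin n, i ≠ j → ∀ k : ℤ, τ i - τ j ≠ (k : ℂ) / 2) :
    Dfun n τ = 2 ^ (∑ i : Fin n, ((n : ℂ) - ((i : ℕ) + 1 : ℕ))
          * (((n : ℂ) + 1) / 2 - ((i : ℕ) + 1 : ℕ)) + ((n : ℂ) - 1) * ∑ i, τ i)
      * ∏ p ∈ ltPairs n, (Real.pi / sin (Real.pi * (τ p.2 - τ p.1))) := by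
  have hpair (p : Fin n × Fin n) (hp : p ∈ ltPairs n) (m : ℕ) :
      τ p.1.rev - τ p.2.rev ≠ -m - 1 / 2 := by
    have := hτ _ _ (Fin.rev_injective.ne (mem_filter.1 hp).2.ne) (-(2 * m + 1))
    push_cast at this
    contrapose! this
    rw [this]
    ring
  rw [Dfun,
    prod_ltPairs_rev fun p => (2 * (Real.pi : ℂ)) ^ (τ p.2 - τ p.1) * Gamma (1 + τ p.1 - τ p.2),
    mul_right_comm _ (∏ i : Fin n, _), mul_right_comm _ (∏ i : Fin n, _), ← prod_mul_distrib,
    ← prod_mul_distrib,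
    prod_congr rfl fun p hp => two_mul_pi_cpow_mul_Gamma_mul_eq _ _ (hpair p hp),
    prod_ltPairs_rev]
  simp only [Fin.rev_rev]
  rw [prod_mul_distrib, prod_cpow_eq_cpow_sum _ two_ne_zero, prod_cpow_eq_cpow_sum _ two_ne_zero,
    mul_right_comm, ← cpow_add _ _ two_ne_zero, two_cpow_exponent_eq]

theorem stmt_13_general (n : ℕ) (ν : Fin n → ℂ)
    (hν : ∀ i j : Fin n, i ≠ j → ∀ k : ℤ, ν i - ν j ≠ (k : ℂ) / 2)
    (σ : Equiv.Perm (Fin n)) :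
    ((Equiv.Perm.sign σ : ℤ) : ℂ) * Dfun n (fun i => ν (σ i)) = Dfun n ν := by
  have hνσ : ∀ i j : Fin n, i ≠ j → ∀ k : ℤ, ν (σ i) - ν (σ j) ≠ (k : ℂ) / 2 :=
    fun i j hij => hν _ _ (σ.injective.ne hij)
  have hodd : Function.Odd fun x : ℂ => Real.pi / sin (Real.pi * x) := fun x => by
    simp only [mul_neg, sin_neg, div_neg]
  have hsign : ((Perm.sign σ : ℤ) : ℂ) * ((Perm.sign σ : ℤ) : ℂ) = 1 := by
    rw [← Int.cast_mul, ← Units.val_mul, Int.units_mul_self, Units.val_one, Int.cast_one]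
  rw [Dfun_eq _ hνσ, Dfun_eq _ hν, Equiv.sum_comp σ ν, prod_ltPairs_comp_perm_of_odd hodd ν σ,
    mul_left_comm, ← mul_assoc ((Perm.sign σ : ℤ) : ℂ), hsign, one_mul]

/-- If `ν_i − ν_j ∉ (1/2)·ℤ` for all `i ≠ j`, then for every
permutation `σ`, `sgn(σ)·D(ν∘σ) = D(ν)`. -/
theorem stmt_13 (n : ℕ) (hn : 1 ≤ n) (ν : Fin n → ℂ)
    (hν : ∀ i j : Fin n, i ≠ j → ∀ k : ℤ, ν i - ν j ≠ (k : ℂ) / 2)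
    (σ : Equiv.Perm (Fin n)) :
    ((Equiv.Perm.sign σ : ℤ) : ℂ) * Dfun n (fun i => ν (σ i)) = Dfun n ν :=
  stmt_13_general n ν hν σ
end

section
/- Let n ≥ 1, let (r₁,…,r_ℓ) be a composition of n, and let w = w_{r₁,…,r_ℓ} be the associated relevant Weyl element. Then for every real n×n upper-triangular unipotent matrix u such that w·u·w⁻¹ is also upper triangular, one has ∑_{i=1}^{n−1} (w·u·w⁻¹)_{i,i+1} = ∑_{i=1}^{n−1} u_{i,i+1}; in particular ψ_I(w·u·w⁻¹) = ψ_I(u), where ψ_I(x) = e^{2πi·(x_{1,2} + x_{2,3} + ⋯ + x_{n−1,n})}. -/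
/-- Partial sums `r̂_i = r₁ + ⋯ + r_i` of a composition (1-based indexing). -/
def rhat (r : ℕ → ℕ) (i : ℕ) : ℕ := ∑ j ∈ Finset.Icc 1 i, r j

/-- The relevant Weyl element `w_{r₁,…,r_ℓ}`: the `n×n` permutation matrix built of
identity blocks `I_{r₁},…,I_{r_ℓ}` along the anti-diagonal, with `I_{r₁}` in the
top-right corner and `I_{r_ℓ}` in the bottom-left corner.  Its block `I_{r_i}`
occupies rows `[r̂_{i−1}, r̂_i)` and columns `[n − r̂_i, n − r̂_{i−1})` (0-based),
so the entry at `(a,b)` is 1 iff `b = (a − r̂_{i−1}) + (n − r̂_i)` for the block `i`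
containing row `a`. -/
noncomputable def relevantWeyl (n ℓ : ℕ) (r : ℕ → ℕ) : Matrix (Fin n) (Fin n) ℝ :=
  open scoped Classical in
  Matrix.of fun a b =>
    if ∃ i ∈ Finset.Icc 1 ℓ, rhat r (i - 1) ≤ (a : ℕ) ∧ (a : ℕ) < rhat r i ∧
        (b : ℕ) = ((a : ℕ) - rhat r (i - 1)) + (n - rhat r i) then 1 else 0

namespace Stmt17Aux

lemma rhat_zero (r : ℕ → ℕ) : rhat r 0 = 0 := by simp [rhat]

lemma rhat_mono (r : ℕ → ℕ) {i j : ℕ} (h : i ≤ j) : rhat r i ≤ rhat r j :=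
  Finset.sum_le_sum_of_subset (Finset.Icc_subset_Icc le_rfl h)

/-- Index of the block containing position `m` (0-based position). -/
noncomputable def blk (r : ℕ → ℕ) (m : ℕ) : ℕ := sInf {i | m < rhat r i}

/-- The permutation underlying the relevant Weyl element, on `ℕ` level. -/
noncomputable def sig (n : ℕ) (r : ℕ → ℕ) (m : ℕ) : ℕ :=
  m - rhat r (blk r m - 1) + (n - rhat r (blk r m))

section

variable {n ℓ : ℕ} {r : ℕ → ℕ} {m m' : ℕ}

lemma blk_lt (hm : m < rhat r ℓ) : m < rhat r (blk r m) :=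
  Nat.sInf_mem (⟨ℓ, hm⟩ : {i | m < rhat r i}.Nonempty)

lemma blk_le (hm : m < rhat r ℓ) : blk r m ≤ ℓ := Nat.sInf_le hm

lemma blk_pos (hm : m < rhat r ℓ) : 1 ≤ blk r m := by
  rcases Nat.eq_zero_or_pos (blk r m) with h | h
  · have := blk_lt hm
    rw [h, rhat_zero] at this
    omega
  · exact h

lemma blk_prev (hm : m < rhat r ℓ) : rhat r (blk r m - 1) ≤ m := by
  by_contra h
  push_neg at h
  have h2 : blk r m ≤ blk r m - 1 := Nat.sInf_le h
  have := blk_pos hm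
  omega

lemma blk_uniq (hm : m < rhat r ℓ) {i : ℕ} (h1 : 1 ≤ i)
    (h2 : rhat r (i - 1) ≤ m) (h3 : m < rhat r i) : blk r m = i := by
  have hle : blk r m ≤ i := Nat.sInf_le h3
  by_contra hne
  have h4 : blk r m ≤ i - 1 := by omega
  have := (blk_lt hm).trans_le (rhat_mono r h4)
  omega

lemma blk_mono (h : m ≤ m') (hm' : m' < rhat r ℓ) : blk r m ≤ blk r m' :=
  Nat.sInf_le (h.trans_lt (blk_lt hm'))

lemma sig_lt (hsum : rhat r ℓ = n) (hm : m < n) : sig n r m < n := by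
  have hm' : m < rhat r ℓ := hsum ▸ hm
  have h1 := blk_lt hm'
  have h2 := blk_prev hm'
  have h3 : rhat r (blk r m) ≤ n := hsum ▸ rhat_mono r (blk_le hm')
  have h4 := blk_pos hm'
  have h5 : rhat r (blk r m - 1) ≤ rhat r (blk r m) := rhat_mono r (by omega)
  unfold sig
  omega

lemma sig_ge (hsum : rhat r ℓ = n) (hm : m < n) :
    n - rhat r (blk r m) ≤ sig n r m := Nat.le_add_left _ _

/-- If `m` is in an earlier block than `m'`, then `σ m' < σ m`. -/
lemma sig_cross (hsum : rhat r ℓ = n) (hm : m < n) (hm' : m' < n)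
    (hb : blk r m < blk r m') : sig n r m' < sig n r m := by
  have hmr : m < rhat r ℓ := hsum ▸ hm
  have hmr' : m' < rhat r ℓ := hsum ▸ hm'
  have h1 : rhat r (blk r m) ≤ rhat r (blk r m' - 1) := rhat_mono r (by omega)
  have h2 := blk_lt hmr'
  have h3 := blk_prev hmr'
  have h4 : rhat r (blk r m') ≤ n := hsum ▸ rhat_mono r (blk_le hmr')
  have h5 := blk_prev hmr
  have h6 := blk_lt hmr
  have h7 : rhat r (blk r m) ≤ n := hsum ▸ rhat_mono r (blk_le hmr)
  have h8 : rhat r (blk r m - 1) ≤ rhat r (blk r m) := rhat_mono r (by omega)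
  have h9 : rhat r (blk r m' - 1) ≤ rhat r (blk r m') := rhat_mono r (by omega)
  unfold sig
  omega

/-- Within the same block, `σ` is a shift. -/
lemma sig_same (hsum : rhat r ℓ = n) (hm : m < n) (hm' : m' < n)
    (hb : blk r m = blk r m') (hle : m ≤ m') :
    sig n r m' = sig n r m + (m' - m) := by
  have hmr : m < rhat r ℓ := hsum ▸ hm
  have hmr' : m' < rhat r ℓ := hsum ▸ hm'
  have h2 := blk_lt hmr'
  have h3 := blk_prev hmr
  have h4 : rhat r (blk r m') ≤ n := hsum ▸ rhat_mono r (blk_le hmr')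
  unfold sig
  rw [← hb]
  have h8 : rhat r (blk r m - 1) ≤ rhat r (blk r m) := rhat_mono r (by omega)
  rw [← hb] at h2
  omega

lemma sig_inj (hsum : rhat r ℓ = n) (hm : m < n) (hm' : m' < n)
    (h : sig n r m = sig n r m') : m = m' := by
  rcases lt_trichotomy (blk r m) (blk r m') with hb | hb | hb
  · have := sig_cross hsum hm hm' hb; omega
  · rcases le_or_gt m m' with hle | hle
    · have := sig_same hsum hm hm' hb hle; omega
    · have := sig_same hsum hm' hm hb.symm hle.le; omega
  · have := sig_cross hsum hm' hm hb; omega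

end

end Stmt17Aux

open Stmt17Aux in
theorem stmt_17 (n : ℕ) (hn : 1 ≤ n) (ℓ : ℕ) (r : ℕ → ℕ) (hℓ : 1 ≤ ℓ)
    (hr : ∀ i ∈ Finset.Icc 1 ℓ, 1 ≤ r i) (hsum : rhat r ℓ = n)
    (u : Matrix (Fin n) (Fin n) ℝ)
    (hu_upper : ∀ i j : Fin n, j < i → u i j = 0)
    (hu_diag : ∀ i : Fin n, u i i = 1)
    (hconj : ∀ i j : Fin n, j < i →
      (relevantWeyl n ℓ r * u * (relevantWeyl n ℓ r)⁻¹) i j = 0) :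
    (∑ p ∈ Finset.univ.filter (fun p : Fin n × Fin n => (p.2 : ℕ) = (p.1 : ℕ) + 1),
        (relevantWeyl n ℓ r * u * (relevantWeyl n ℓ r)⁻¹) p.1 p.2)
      = (∑ p ∈ Finset.univ.filter (fun p : Fin n × Fin n => (p.2 : ℕ) = (p.1 : ℕ) + 1),
          u p.1 p.2)
    ∧ Complex.exp (2 * (Real.pi : ℂ) * Complex.I
        * ((∑ p ∈ Finset.univ.filter
              (fun p : Fin n × Fin n => (p.2 : ℕ) = (p.1 : ℕ) + 1),
            (relevantWeyl n ℓ r * u * (relevantWeyl n ℓ r)⁻¹) p.1 p.2 : ℝ) : ℂ))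
      = Complex.exp (2 * (Real.pi : ℂ) * Complex.I
          * ((∑ p ∈ Finset.univ.filter
                (fun p : Fin n × Fin n => (p.2 : ℕ) = (p.1 : ℕ) + 1),
              u p.1 p.2 : ℝ) : ℂ)) := by
  classical
  set w := relevantWeyl n ℓ r with hw
  -- the permutation as a map `Fin n → Fin n`
  let σ : Fin n → Fin n := fun a => ⟨sig n r a, sig_lt hsum a.isLt⟩
  have hσval : ∀ a : Fin n, (σ a : ℕ) = sig n r a := fun a => rfl
  have hσinj : Function.Injective σ := by
    intro a b hab
    exact Fin.ext (sig_inj hsum a.isLt b.isLt (congrArg Fin.val hab))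
  -- entries of w
  have w_apply : ∀ a b : Fin n, w a b = if b = σ a then 1 else 0 := by
    intro a b
    have hiff : (∃ i ∈ Finset.Icc 1 ℓ, rhat r (i - 1) ≤ (a : ℕ) ∧ (a : ℕ) < rhat r i ∧
        (b : ℕ) = ((a : ℕ) - rhat r (i - 1)) + (n - rhat r i)) ↔ b = σ a := by
      constructor
      · rintro ⟨i, hi, h1, h2, h3⟩
        rw [Finset.mem_Icc] at hi
        have hbu : blk r (a : ℕ) = i :=
          blk_uniq (show (a:ℕ) < rhat r ℓ by rw [hsum]; exact a.isLt) hi.1 h1 h2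
        apply Fin.ext
        rw [hσval, sig, hbu, h3]
      · rintro rfl
        have har : (a : ℕ) < rhat r ℓ := hsum ▸ a.isLt
        exact ⟨blk r (a : ℕ), Finset.mem_Icc.mpr ⟨blk_pos har, blk_le har⟩,
          blk_prev har, blk_lt har, rfl⟩
    simp only [hw, relevantWeyl, Matrix.of_apply, hiff]
  -- w is orthogonal, so w⁻¹ = w.transpose
  have hw1 : w * w.transpose = 1 := by
    ext a b
    simp only [Matrix.mul_apply, Matrix.transpose_apply, w_apply, Matrix.one_apply,
      ite_mul, one_mul, zero_mul]
    rw [Finset.sum_ite_eq' Finset.univ (σ a) (fun c => if c = σ b then (1:ℝ) else 0)]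
    simp [hσinj.eq_iff, eq_comm]
  have hwinv : w⁻¹ = w.transpose := Matrix.inv_eq_right_inv hw1
  -- entries of the conjugate
  have hconj_apply : ∀ a b : Fin n, (w * u * w⁻¹) a b = u (σ a) (σ b) := by
    intro a b
    rw [hwinv]
    have h1 : ∀ c : Fin n, (w * u) a c = u (σ a) c := by
      intro c
      simp only [Matrix.mul_apply, w_apply, ite_mul, one_mul, zero_mul]
      exact Finset.sum_ite_eq' Finset.univ (σ a) (fun k => u k c) |>.trans (by simp)
    simp only [Matrix.mul_apply, Matrix.transpose_apply, h1, w_apply, mul_ite, mul_one,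
      mul_zero]
    exact Finset.sum_ite_eq' Finset.univ (σ b) (fun c => u (σ a) c) |>.trans (by simp)
  -- superdiagonal pairs
  set S : Finset (Fin n × Fin n) :=
    Finset.univ.filter (fun p : Fin n × Fin n => (p.2 : ℕ) = (p.1 : ℕ) + 1) with hS
  -- the key equality of sums
  have key : (∑ p ∈ S, (w * u * w⁻¹) p.1 p.2) = ∑ p ∈ S, u p.1 p.2 := by
    have h1 : (∑ p ∈ S, (w * u * w⁻¹) p.1 p.2) = ∑ p ∈ S, u (σ p.1) (σ p.2) :=
      Finset.sum_congr rfl (fun p _ => hconj_apply p.1 p.2)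
    rw [h1]
    -- reindex by the injective map `e`
    let e : Fin n × Fin n → Fin n × Fin n := fun p => (σ p.1, σ p.2)
    have heinj : ∀ p ∈ S, ∀ q ∈ S, e p = e q → p = q := by
      intro p _ q _ h
      have h1 := congrArg Prod.fst h
      have h2 := congrArg Prod.snd h
      exact Prod.ext (hσinj h1) (hσinj h2)
    have h2 : (∑ p ∈ S, u (σ p.1) (σ p.2)) = ∑ q ∈ S.image e, u q.1 q.2 :=
      (Finset.sum_image (f := fun q : Fin n × Fin n => u q.1 q.2) heinj).symm
    rw [h2]
    -- dichotomy lemma: successive positions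
    have dich : ∀ a b : Fin n, (a : ℕ) < b →
        ((b : ℕ) = a + 1 ∧ blk r (a:ℕ) = blk r (b:ℕ) → (σ b : ℕ) = (σ a : ℕ) + 1) := by
      intro a b _ ⟨h1, h2⟩
      have := sig_same hsum a.isLt b.isLt h2 (by omega)
      rw [hσval, hσval, this, h1]
      omega
    -- terms of `S.image e` not in `S` vanish (u is strictly below diagonal there)
    have hA : (∑ q ∈ S.image e ∩ S, u q.1 q.2) = ∑ q ∈ S.image e, u q.1 q.2 := by
      refine Finset.sum_subset Finset.inter_subset_left ?_
      intro q hq hq'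
      rw [Finset.mem_inter, not_and] at hq'
      have hqS : q ∉ S := hq' hq
      rcases Finset.mem_image.mp hq with ⟨p, hpS, rfl⟩
      have hp : (p.2 : ℕ) = (p.1 : ℕ) + 1 := by
        have := Finset.mem_filter.mp hpS; exact this.2
      -- show σ p.2 < σ p.1
      have hlt : (σ p.2 : ℕ) < (σ p.1 : ℕ) := by
        rcases lt_or_eq_of_le (blk_mono (m := (p.1 : ℕ)) (m' := (p.2 : ℕ))
            (by omega) (show ((p.2:Fin n):ℕ) < rhat r ℓ by rw [hsum]; exact p.2.isLt)) with hb | hb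
        · exact sig_cross hsum p.1.isLt p.2.isLt hb
        · exfalso
          apply hqS
          rw [hS, Finset.mem_filter]
          refine ⟨Finset.mem_univ _, ?_⟩
          exact dich p.1 p.2 (by omega) ⟨hp, hb⟩
      exact hu_upper _ _ (by exact hlt)
    -- terms of `S` not in `S.image e` vanish (by upper-triangularity of conjugate)
    have hB : (∑ q ∈ S.image e ∩ S, u q.1 q.2) = ∑ q ∈ S, u q.1 q.2 := by
      refine Finset.sum_subset Finset.inter_subset_right ?_
      intro q hqS hq'
      have hq : (q.2 : ℕ) = (q.1 : ℕ) + 1 := (Finset.mem_filter.mp hqS).2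
      have hqe : q ∉ S.image e := fun h => hq' (Finset.mem_inter.mpr ⟨h, hqS⟩)
      -- preimages under σ
      have hbij : Function.Bijective σ := Finite.injective_iff_bijective.mp hσinj
      obtain ⟨a, ha⟩ := hbij.2 q.1
      obtain ⟨b, hb⟩ := hbij.2 q.2
      have hvals : (σ b : ℕ) = (σ a : ℕ) + 1 := by rw [ha, hb]; exact hq
      have hba : b < a := by
        rcases lt_trichotomy (a : ℕ) (b : ℕ) with h | h | h
        · -- then b = a + 1 and q ∈ S.image e, contradiction
          exfalso
          rcases lt_or_eq_of_le (blk_mono (m := (a : ℕ)) (m' := (b : ℕ))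
              h.le (show ((b:Fin n):ℕ) < rhat r ℓ by rw [hsum]; exact b.isLt)) with hbb | hbb
          · have := sig_cross hsum a.isLt b.isLt hbb
            rw [hσval, hσval] at hvals; omega
          · -- same block: σ b = σ a + (b - a) forces b = a+1
            have hsame := sig_same hsum a.isLt b.isLt hbb h.le
            rw [hσval, hσval] at hvals
            have hb1 : (b : ℕ) = (a : ℕ) + 1 := by omega
            apply hqe
            refine Finset.mem_image.mpr ⟨(a, b), ?_, ?_⟩
            · rw [hS, Finset.mem_filter]; exact ⟨Finset.mem_univ _, hb1⟩
            · show (σ a, σ b) = q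
              rw [ha, hb]
        · exfalso
          have : a = b := Fin.ext h
          rw [this] at hvals; omega
        · exact Fin.lt_def.mpr h
      have := hconj a b hba
      rw [hconj_apply, ha, hb] at this
      exact this
    rw [← hA, hB]
  refine ⟨key, ?_⟩
  rw [key]
end

section
/- Let n ≥ 1, let (r₁,…,r_ℓ) be a composition of n with partial sums r̂_j = r₁+⋯+r_j, let w = w_{r₁,…,r_ℓ} be the associated relevant Weyl element, and let a₁,…,a_n be nonzero real numbers. Then the following are equivalent: (i) for every real n×n upper-triangular unipotent matrix u with w·u·w⁻¹ upper triangular, e^{2πi·∑_{i=1}^{n−1} (a_i/a_{i+1})·(w·u·w⁻¹)_{i,i+1}} = e^{2πi·∑_{i=1}^{n−1} u_{i,i+1}}; (ii) a_i = a_{i+1} for every index i ∈ {1,…,n−1} that is not one of the partial sums r̂₁, …, r̂_{ℓ−1}. -/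
/-!
Write `σ` for the permutation with `w = σ.permMatrix`: it maps each block of rows increasingly
onto a block of columns, the blocks in reverse order. So `w u w⁻¹ = u.submatrix σ σ`, and `σ`
keeps the gap `q - p` of every pair `p < q` whose order it keeps. When `u` and `w u w⁻¹` are both
upper triangular, the superdiagonal entries of `w u w⁻¹` therefore vanish at the block boundaries
`r̂_j` and are a rearrangement of the superdiagonal entries of `u` elsewhere, which gives
(ii) ⇒ (i). Conversely, at a position `i` inside a block the test matrices
`u = 1 + t E_{σ(i-1), σ(i)}` turn (i) into `e^{2πi c t} = e^{2πi t}` for all real `t`, where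
`c = a_i / a_{i+1}`; taking `(c - 1) t = 1/2` forces `c = 1`.
-/

open Finset Matrix

def superdiag (n : ℕ) : Finset (Fin n × Fin n) := univ.filter fun p => (p.2 : ℕ) = p.1 + 1

@[simp] theorem mem_superdiag {n : ℕ} {p : Fin n × Fin n} :
    p ∈ superdiag n ↔ (p.2 : ℕ) = p.1 + 1 := by
  simp [superdiag]

def PreservesOrderedGaps {n : ℕ} (σ : Equiv.Perm (Fin n)) : Prop :=
  ∀ p q, p < q → σ p < σ q → (σ q : ℕ) + p = σ p + q

section Superdiag

variable {n : ℕ} {R : Type*}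

theorem PreservesOrderedGaps.symm {σ : Equiv.Perm (Fin n)} (hσ : PreservesOrderedGaps σ) :
    PreservesOrderedGaps σ.symm := by
  intro p q hpq hσpq
  have := hσ _ _ hσpq (by simpa using hpq)
  simp only [Equiv.apply_symm_apply] at this
  omega

theorem entry_superdiag_eq_ite [Zero R] {τ : Equiv.Perm (Fin n)} (hτ : PreservesOrderedGaps τ)
    {V : Matrix (Fin n) (Fin n) R} (hV : ∀ i j, j < i → V i j = 0) {p : Fin n × Fin n}
    (hp : p ∈ superdiag n) :
    V (τ p.1) (τ p.2) = if (τ p.2 : ℕ) = τ p.1 + 1 then V (τ p.1) (τ p.2) else 0 := by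
  rw [mem_superdiag] at hp
  split_ifs with h
  · rfl
  rcases lt_trichotomy (τ p.1) (τ p.2) with hlt | heq | hgt
  · have := hτ _ _ (Fin.lt_def.2 (by omega)) hlt
    omega
  · have := congrArg Fin.val (τ.injective heq)
    omega
  · exact hV _ _ hgt

theorem sum_superdiag_submatrix [AddCommMonoid R] {σ : Equiv.Perm (Fin n)}
    (hσ : PreservesOrderedGaps σ) {U : Matrix (Fin n) (Fin n) R}
    (hU : ∀ i j, j < i → U i j = 0) (hV : ∀ i j, j < i → U.submatrix σ σ i j = 0) :
    ∑ p ∈ superdiag n, U.submatrix σ σ p.1 p.2 = ∑ p ∈ superdiag n, U p.1 p.2 := by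
  have hL : ∀ p ∈ superdiag n, U.submatrix σ σ p.1 p.2 =
      if (σ p.2 : ℕ) = σ p.1 + 1 then U (σ p.1) (σ p.2) else 0 :=
    fun p hp => entry_superdiag_eq_ite hσ hU hp
  have hR : ∀ p ∈ superdiag n, U p.1 p.2 =
      if (σ.symm p.2 : ℕ) = σ.symm p.1 + 1 then U p.1 p.2 else 0 := fun p hp => by
    simpa using entry_superdiag_eq_ite hσ.symm hV hp
  rw [sum_congr rfl hL, sum_congr rfl hR, ← sum_filter, ← sum_filter]
  exact sum_equiv (σ.prodCongr σ) (by simp [and_comm]) (by simp)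

theorem one_add_single_apply_of_lt {ι : Type*} [LinearOrder ι] [NonAssocSemiring R] {i j x y : ι}
    (hij : i < j) (hyx : y < x) (t : R) : (1 + single i j t) x y = 0 := by
  rw [Matrix.add_apply, one_apply_ne (ne_of_gt hyx), single_apply_of_ne]
  · simp
  · rintro ⟨rfl, rfl⟩
    exact lt_asymm hij hyx

theorem one_add_single_apply_self {ι : Type*} [DecidableEq ι] [NonAssocSemiring R] {i j : ι}
    (hij : i ≠ j) (x : ι) (t : R) : (1 + single i j t) x x = 1 := by
  rw [Matrix.add_apply, one_apply_eq, single_apply_of_ne]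
  · simp
  · rintro ⟨rfl, rfl⟩
    exact hij rfl

theorem sum_superdiag_mul_one_add_single [NonAssocSemiring R] (c : Fin n × Fin n → R)
    {i j : Fin n} (hij : (j : ℕ) = i + 1) (t : R) :
    ∑ p ∈ superdiag n, c p * (1 + single i j t) p.1 p.2 = c (i, j) * t := by
  have hne : ∀ p ∈ superdiag n, p.1 ≠ p.2 := fun p hp h => by
    rw [mem_superdiag, h] at hp
    omega
  rw [sum_eq_single_of_mem (i, j) (by simpa using hij)]
  · simp [one_apply_ne (hne (i, j) (by simpa using hij))]
  · rintro p hp hpij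
    rw [Matrix.add_apply, one_apply_ne (hne p hp), single_apply_of_ne]
    · simp
    · rintro ⟨rfl, rfl⟩
      exact hpij rfl

theorem sum_superdiag_one_add_single [NonAssocSemiring R] {i j : Fin n} (hij : (j : ℕ) = i + 1)
    (t : R) : ∑ p ∈ superdiag n, (1 + single i j t) p.1 p.2 = t := by
  simpa using sum_superdiag_mul_one_add_single (fun _ => 1) hij t

end Superdiag

theorem Matrix.permMatrix_mul_mul_inv {ι R : Type*} [Fintype ι] [DecidableEq ι] [CommRing R]
    (σ : Equiv.Perm ι) (u : Matrix ι ι R) :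
    σ.permMatrix R * u * (σ.permMatrix R)⁻¹ = u.submatrix σ σ := by
  have hinv : (σ.permMatrix R)⁻¹ = σ⁻¹.permMatrix R :=
    inv_eq_right_inv (by rw [← permMatrix_mul, inv_mul_cancel, permMatrix_one])
  rw [hinv, PEquiv.toMatrix_toPEquiv_mul, PEquiv.mul_toMatrix_toPEquiv, submatrix_submatrix]
  rfl

open Complex in
theorem eq_one_of_forall_cexp_mul_eq {c : ℝ}
    (h : ∀ t : ℝ, cexp (2 * Real.pi * I * ((c * t : ℝ) : ℂ)) = cexp (2 * Real.pi * I * t)) :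
    c = 1 := by
  by_contra hc
  have hct : c * (1 / (2 * (c - 1))) = 1 / (2 * (c - 1)) + 1 / 2 := by
    field_simp [sub_ne_zero.2 hc]
    ring
  have := h (1 / (2 * (c - 1)))
  rw [hct, ofReal_add, mul_add, exp_add,
    show 2 * (Real.pi : ℂ) * I * ((1 / 2 : ℝ) : ℂ) = Real.pi * I by push_cast; ring,
    exp_pi_mul_I] at this
  exact exp_ne_zero _ (by linear_combination -this / 2)

theorem rhat_zero (r : ℕ → ℕ) : rhat r 0 = 0 := by simp [rhat]

theorem rhat_mono (r : ℕ → ℕ) : Monotone (rhat r) := fun _ _ h =>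
  sum_le_sum_of_subset (Icc_subset_Icc_right h)

/-- The 1-based number of the block containing the 0-based index `a`. -/
noncomputable def blockIdx (r : ℕ → ℕ) (a : ℕ) : ℕ :=
  open scoped Classical in
  if h : ∃ k, a < rhat r k then Nat.find h else 0

section Blocks

variable {r : ℕ → ℕ} {a b k m : ℕ}

theorem lt_rhat_blockIdx (h : a < rhat r k) : a < rhat r (blockIdx r a) := by
  classical
  have he : ∃ k, a < rhat r k := ⟨k, h⟩
  rw [blockIdx, dif_pos he]
  exact Nat.find_spec he

theorem blockIdx_le (h : a < rhat r k) : blockIdx r a ≤ k := by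
  classical
  have he : ∃ k, a < rhat r k := ⟨k, h⟩
  rw [blockIdx, dif_pos he]
  exact Nat.find_min' he h

theorem rhat_blockIdx_sub_one_le (r : ℕ → ℕ) (a : ℕ) : rhat r (blockIdx r a - 1) ≤ a := by
  by_contra! h
  have := blockIdx_le h
  by_cases h0 : blockIdx r a = 0
  · simp [h0, rhat_zero] at h
  · omega

theorem lt_blockIdx (hk : rhat r k ≤ a) (h : a < rhat r m) : k < blockIdx r a := by
  by_contra! hle
  have := rhat_mono r hle
  have := lt_rhat_blockIdx h
  omega

theorem blockIdx_mono (hab : a ≤ b) (h : b < rhat r m) : blockIdx r a ≤ blockIdx r b :=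
  blockIdx_le (lt_of_le_of_lt hab (lt_rhat_blockIdx h))

theorem blockIdx_eq_blockIdx_succ_iff {ℓ : ℕ} (h : a + 1 < rhat r ℓ) :
    blockIdx r a = blockIdx r (a + 1) ↔ ∀ j, 1 ≤ j → j < ℓ → a + 1 ≠ rhat r j := by
  have hle := blockIdx_mono (show a ≤ a + 1 by omega) h
  have hlt := lt_rhat_blockIdx (show a < rhat r ℓ by omega)
  constructor
  · intro heq j _ _ hj
    have := blockIdx_le (show a < rhat r j by omega)
    have := lt_blockIdx hj.symm.le h
    omega
  · intro hno
    by_contra hne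
    have hpos := lt_blockIdx (k := 0) (by simp [rhat_zero]) hlt
    have hsucc : ¬ a + 1 < rhat r (blockIdx r a) := fun h' => by
      have := blockIdx_le h'
      omega
    exact hno _ hpos (by have := blockIdx_le h; omega) (by omega)

end Blocks

/-- Row `a` of `relevantWeyl n ℓ r` has its `1` in column `weylIndex n r a`. -/
noncomputable def weylIndex (n : ℕ) (r : ℕ → ℕ) (a : ℕ) : ℕ :=
  a - rhat r (blockIdx r a - 1) + (n - rhat r (blockIdx r a))

section WeylIndex

variable {n ℓ : ℕ} {r : ℕ → ℕ} {a b : ℕ}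

theorem weylIndex_add_of_blockIdx_eq (h : blockIdx r a = blockIdx r b) :
    weylIndex n r b + a = weylIndex n r a + b := by
  have ha := rhat_blockIdx_sub_one_le r a
  have hb := rhat_blockIdx_sub_one_le r b
  rw [h] at ha
  unfold weylIndex
  rw [h]
  omega

theorem weylIndex_lt (hsum : rhat r ℓ = n) (ha : a < n) : weylIndex n r a < n := by
  have := lt_rhat_blockIdx (hsum ▸ ha)
  have := rhat_blockIdx_sub_one_le r a
  unfold weylIndex
  omega

theorem weylIndex_lt_of_blockIdx_lt (hsum : rhat r ℓ = n) (hb : b < n)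
    (h : blockIdx r a < blockIdx r b) : weylIndex n r b < weylIndex n r a := by
  have := rhat_mono r (show blockIdx r a ≤ blockIdx r b - 1 by omega)
  have := lt_rhat_blockIdx (hsum ▸ hb)
  have := hsum ▸ rhat_mono r (blockIdx_le (hsum ▸ hb))
  have := rhat_blockIdx_sub_one_le r b
  unfold weylIndex
  omega

theorem weylIndex_injOn (hsum : rhat r ℓ = n) : Set.InjOn (weylIndex n r) (Set.Iio n) := by
  intro a ha b hb h
  rcases lt_trichotomy (blockIdx r a) (blockIdx r b) with hlt | heq | hgt
  · exact absurd h (weylIndex_lt_of_blockIdx_lt hsum hb hlt).ne'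
  · have := weylIndex_add_of_blockIdx_eq (n := n) heq
    omega
  · exact absurd h (weylIndex_lt_of_blockIdx_lt hsum ha hgt).ne

end WeylIndex

section WeylPerm

variable {n ℓ : ℕ} {r : ℕ → ℕ}

noncomputable def weylPerm (hsum : rhat r ℓ = n) : Equiv.Perm (Fin n) :=
  Equiv.ofBijective (fun a => ⟨weylIndex n r a, weylIndex_lt hsum a.isLt⟩)
    (Finite.injective_iff_bijective.1 fun a b h =>
      Fin.ext (weylIndex_injOn hsum a.isLt b.isLt (congrArg Fin.val h)))

@[simp] theorem weylPerm_val (hsum : rhat r ℓ = n) (a : Fin n) :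
    (weylPerm hsum a : ℕ) = weylIndex n r a := rfl

theorem relevantWeyl_eq_permMatrix (hsum : rhat r ℓ = n) :
    relevantWeyl n ℓ r = (weylPerm hsum).permMatrix ℝ := by
  ext a b
  have hblock : (∃ i ∈ Icc 1 ℓ, rhat r (i - 1) ≤ (a : ℕ) ∧ (a : ℕ) < rhat r i ∧
      (b : ℕ) = ((a : ℕ) - rhat r (i - 1)) + (n - rhat r i)) ↔ b = weylPerm hsum a := by
    rw [Fin.ext_iff, weylPerm_val, weylIndex]
    constructor
    · rintro ⟨i, hi, hlo, hhi, hb⟩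
      rw [mem_Icc] at hi
      have := blockIdx_le hhi
      have := lt_blockIdx hlo hhi
      obtain rfl : blockIdx r a = i := by omega
      exact hb
    · intro hb
      have ha : (a : ℕ) < rhat r ℓ := hsum ▸ a.isLt
      have hlt := lt_rhat_blockIdx ha
      have := lt_blockIdx (k := 0) (by simp [rhat_zero]) hlt
      exact ⟨blockIdx r a, mem_Icc.2 ⟨this, blockIdx_le ha⟩,
        rhat_blockIdx_sub_one_le r a, hlt, hb⟩
  simp only [relevantWeyl, of_apply, hblock, Equiv.Perm.permMatrix,
    PEquiv.toMatrix_toPEquiv_apply, Pi.single_apply]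

theorem relevantWeyl_conj (hsum : rhat r ℓ = n) (u : Matrix (Fin n) (Fin n) ℝ) :
    relevantWeyl n ℓ r * u * (relevantWeyl n ℓ r)⁻¹ =
      u.submatrix (weylPerm hsum) (weylPerm hsum) := by
  rw [relevantWeyl_eq_permMatrix hsum, permMatrix_mul_mul_inv]

theorem preservesOrderedGaps_weylPerm (hsum : rhat r ℓ = n) :
    PreservesOrderedGaps (weylPerm hsum) := by
  intro p q hpq hσ
  rw [Fin.lt_def, weylPerm_val, weylPerm_val] at hσ
  simp only [weylPerm_val]
  have hq : (q : ℕ) < rhat r ℓ := hsum ▸ q.isLt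
  rcases (blockIdx_mono (Fin.le_def.1 hpq.le) hq).eq_or_lt with heq | hlt
  · exact weylIndex_add_of_blockIdx_eq heq
  · exact absurd hσ (weylIndex_lt_of_blockIdx_lt hsum q.isLt hlt).asymm

theorem weylPerm_lt_of_blockIdx_ne (hsum : rhat r ℓ = n) {p q : Fin n}
    (hpq : (q : ℕ) = p + 1) (h : blockIdx r p ≠ blockIdx r q) :
    weylPerm hsum q < weylPerm hsum p := by
  have hq : (q : ℕ) < rhat r ℓ := hsum ▸ q.isLt
  have hle := blockIdx_mono (show (p : ℕ) ≤ q by omega) hq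
  exact weylIndex_lt_of_blockIdx_lt hsum q.isLt (lt_of_le_of_ne hle h)

theorem weylPerm_val_succ_of_blockIdx_eq (hsum : rhat r ℓ = n) {p q : Fin n}
    (hpq : (q : ℕ) = p + 1) (h : blockIdx r p = blockIdx r q) :
    (weylPerm hsum q : ℕ) = weylPerm hsum p + 1 := by
  have := weylIndex_add_of_blockIdx_eq (n := n) h
  simp only [weylPerm_val]
  omega

theorem sum_superdiag_mul_submatrix_weylPerm {R : Type*} [Semiring R] (hsum : rhat r ℓ = n)
    {c : Fin n × Fin n → R} (hc : ∀ p ∈ superdiag n, blockIdx r p.1 = blockIdx r p.2 → c p = 1)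
    {U : Matrix (Fin n) (Fin n) R} (hU : ∀ i j, j < i → U i j = 0) :
    ∑ p ∈ superdiag n, c p * U.submatrix (weylPerm hsum) (weylPerm hsum) p.1 p.2 =
      ∑ p ∈ superdiag n, U.submatrix (weylPerm hsum) (weylPerm hsum) p.1 p.2 := by
  refine sum_congr rfl fun p hp => ?_
  by_cases hb : blockIdx r p.1 = blockIdx r p.2
  · rw [hc p hp hb, one_mul]
  · rw [submatrix_apply, hU _ _ (weylPerm_lt_of_blockIdx_ne hsum (mem_superdiag.1 hp) hb),
      mul_zero]

end WeylPerm

theorem stmt_18_general (n : ℕ) (ℓ : ℕ) (r : ℕ → ℕ) (hsum : rhat r ℓ = n)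
    (a : ℕ → ℝ) (ha : ∀ i ∈ Finset.Icc 1 n, a i ≠ 0) :
    (∀ u : Matrix (Fin n) (Fin n) ℝ,
        (∀ i j : Fin n, j < i → u i j = 0) → (∀ i : Fin n, u i i = 1) →
        (∀ i j : Fin n, j < i →
          (relevantWeyl n ℓ r * u * (relevantWeyl n ℓ r)⁻¹) i j = 0) →
        Complex.exp (2 * (Real.pi : ℂ) * Complex.I
            * ((∑ p ∈ Finset.univ.filter
                  (fun p : Fin n × Fin n => (p.2 : ℕ) = (p.1 : ℕ) + 1),
                (a ((p.1 : ℕ) + 1) / a ((p.1 : ℕ) + 2))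
                  * (relevantWeyl n ℓ r * u * (relevantWeyl n ℓ r)⁻¹) p.1 p.2 : ℝ) : ℂ))
          = Complex.exp (2 * (Real.pi : ℂ) * Complex.I
              * ((∑ p ∈ Finset.univ.filter
                    (fun p : Fin n × Fin n => (p.2 : ℕ) = (p.1 : ℕ) + 1),
                  u p.1 p.2 : ℝ) : ℂ)))
      ↔ (∀ i : ℕ, 1 ≤ i → i ≤ n - 1 →
          (∀ j : ℕ, 1 ≤ j → j < ℓ → i ≠ rhat r j) → a i = a (i + 1)) := by
  set σ := weylPerm hsum
  have hS : univ.filter (fun p : Fin n × Fin n => (p.2 : ℕ) = p.1 + 1) = superdiag n := rfl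
  simp only [relevantWeyl_conj hsum, hS]
  constructor
  · intro H i hi1 hi2 hbd
    obtain ⟨m, rfl⟩ : ∃ m, i = m + 1 := ⟨i - 1, by omega⟩
    let A : Fin n := ⟨m, by omega⟩
    let B : Fin n := ⟨m + 1, by omega⟩
    have hblock : blockIdx r m = blockIdx r (m + 1) :=
      (blockIdx_eq_blockIdx_succ_iff (show m + 1 < rhat r ℓ by omega)).2 hbd
    have hσAB : (σ B : ℕ) = σ A + 1 := weylPerm_val_succ_of_blockIdx_eq hsum rfl hblock
    have hσlt : σ A < σ B := Fin.lt_def.2 (by omega)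
    have hratio : a (m + 1) / a (m + 2) = 1 := eq_one_of_forall_cexp_mul_eq fun t => by
      have hconj : (1 + single (σ A) (σ B) t).submatrix σ σ = 1 + single A B t := by
        simp [submatrix_add, submatrix_one_equiv]
      have := H (1 + single (σ A) (σ B) t) (fun _ _ h => one_add_single_apply_of_lt hσlt h t)
        (fun x => one_add_single_apply_self hσlt.ne x t)
        (by
          rw [hconj]
          exact fun _ _ h => one_add_single_apply_of_lt (show A < B from Nat.lt_succ_self m) h t)
      rwa [hconj, sum_superdiag_mul_one_add_single _ rfl,
        sum_superdiag_one_add_single hσAB] at this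
    exact (div_eq_one_iff_eq (ha _ (by simp; omega))).1 hratio
  · intro hsame u hU _ hV
    have hweights : ∀ p ∈ superdiag n, blockIdx r p.1 = blockIdx r p.2 →
        a (p.1 + 1) / a (p.1 + 2) = 1 := fun p hp hb => by
      rw [mem_superdiag] at hp
      have hnb := (blockIdx_eq_blockIdx_succ_iff
        (show (p.1 : ℕ) + 1 < rhat r ℓ by omega)).1 (hp ▸ hb)
      rw [hsame _ (by omega) (by omega) hnb, div_self (ha _ (by simp; omega))]
    rw [sum_superdiag_mul_submatrix_weylPerm hsum hweights hU,
      sum_superdiag_submatrix (preservesOrderedGaps_weylPerm hsum) hU hV]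

/-- Let `(r₁,…,r_ℓ)` be a composition of `n`, `w` the associated
relevant Weyl element, and `a₁,…,a_n` nonzero reals (1-based indexing via
`a : ℕ → ℝ`).  Then the compatibility condition
`e^{2πi·∑_i (a_i/a_{i+1})(wuw⁻¹)_{i,i+1}} = e^{2πi·∑_i u_{i,i+1}}` for all
upper-triangular unipotent `u` with `wuw⁻¹` upper triangular holds **iff**
`a_i = a_{i+1}` for every `i ∈ {1,…,n−1}` that is not a partial sum
`r̂₁,…,r̂_{ℓ−1}`. -/
theorem stmt_18 (n : ℕ) (hn : 1 ≤ n) (ℓ : ℕ) (r : ℕ → ℕ) (hℓ : 1 ≤ ℓ)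
    (hr : ∀ i ∈ Finset.Icc 1 ℓ, 1 ≤ r i) (hsum : rhat r ℓ = n)
    (a : ℕ → ℝ) (ha : ∀ i ∈ Finset.Icc 1 n, a i ≠ 0) :
    (∀ u : Matrix (Fin n) (Fin n) ℝ,
        (∀ i j : Fin n, j < i → u i j = 0) → (∀ i : Fin n, u i i = 1) →
        (∀ i j : Fin n, j < i →
          (relevantWeyl n ℓ r * u * (relevantWeyl n ℓ r)⁻¹) i j = 0) →
        Complex.exp (2 * (Real.pi : ℂ) * Complex.I
            * ((∑ p ∈ Finset.univ.filter
                  (fun p : Fin n × Fin n => (p.2 : ℕ) = (p.1 : ℕ) + 1),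
                (a ((p.1 : ℕ) + 1) / a ((p.1 : ℕ) + 2))
                  * (relevantWeyl n ℓ r * u * (relevantWeyl n ℓ r)⁻¹) p.1 p.2 : ℝ) : ℂ))
          = Complex.exp (2 * (Real.pi : ℂ) * Complex.I
              * ((∑ p ∈ Finset.univ.filter
                    (fun p : Fin n × Fin n => (p.2 : ℕ) = (p.1 : ℕ) + 1),
                  u p.1 p.2 : ℝ) : ℂ)))
      ↔ (∀ i : ℕ, 1 ≤ i → i ≤ n - 1 →
          (∀ j : ℕ, 1 ≤ j → j < ℓ → i ≠ rhat r j) → a i = a (i + 1)) :=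
  stmt_18_general n ℓ r hsum a ha
end
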